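/- arXiv:1401.4109 — 2 statements merged into one kernel-verified Lean document; each statement's English description precedes it below -/
import Mathlib

section
/- Let θ, η ∈ 𝓐 with J(θ) < ∞, and for λ ∈ [0,1] set θ^λ = (1−λ)θ + λη. Then the directional derivative lim_{λ↓0} (J(θ^λ) − J(θ))/λ exists and equals E[∫_0^∞ c_θ(t, x + X_t, θ_t)(η_t − θ_t) e^{−rt} dt] + E[∫_{[0,∞)} k_t e^{−rt} dη_t] − E[∫_{[0,∞)} k_t e^{−rt} dθ_t]. -/
open MeasureTheory Set Filter
open scoped ENNReal NNReal

noncomputable section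

/-- A singular control: paths are nondecreasing, right-continuous, nonnegative,
and vanish for negative times. -/
structure SingularControl (Ω : Type*) where
  toFun : Ω → ℝ → ℝ
  mono : ∀ ω, Monotone (toFun ω)
  rightCont : ∀ ω x, ContinuousWithinAt (toFun ω) (Set.Ici x) x
  nonneg : ∀ ω t, 0 ≤ toFun ω t
  zero_of_neg : ∀ ω t, t < 0 → toFun ω t = 0

namespace SingularControl

variable {Ω : Type*}

/-- The path of a singular control as a Stieltjes function; its Lebesgue–Stieltjes
measure gives mass `θ 0 ω` to `{0}` since the path vanishes for negative times. -/
def sf (θ : SingularControl Ω) (ω : Ω) : StieltjesFunction ℝ :=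
  ⟨θ.toFun ω, θ.mono ω, θ.rightCont ω⟩

/-- `∫_{[0,∞)} e^{-rt} dθ_t` as an extended nonnegative real. -/
def discTotal (r : ℝ) (θ : SingularControl Ω) (ω : Ω) : ℝ≥0∞ :=
  ∫⁻ t in Set.Ici (0:ℝ), ENNReal.ofReal (Real.exp (-r * t)) ∂(θ.sf ω).measure

/-- Convex combination `(1-l)·θ + l·η` of two singular controls (equal to `θ`
for `l` outside `[0,1]`). -/
def comb (θ η : SingularControl Ω) (l : ℝ) : SingularControl Ω :=
  if h : 0 ≤ l ∧ l ≤ 1 then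
    { toFun := fun ω t => (1 - l) * θ.toFun ω t + l * η.toFun ω t
      mono := fun ω a b hab => by
        have h1 : 0 ≤ (1 - l) * (θ.toFun ω b - θ.toFun ω a) :=
          mul_nonneg (by linarith [h.2]) (sub_nonneg.mpr (θ.mono ω hab))
        have h2 : 0 ≤ l * (η.toFun ω b - η.toFun ω a) :=
          mul_nonneg h.1 (sub_nonneg.mpr (η.mono ω hab))
        show (1 - l) * θ.toFun ω a + l * η.toFun ω a ≤ (1 - l) * θ.toFun ω b + l * η.toFun ω b
        nlinarith [h1, h2]
      rightCont := fun ω x =>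
        ((θ.rightCont ω x).const_mul (1 - l)).add ((η.rightCont ω x).const_mul l)
      nonneg := fun ω t =>
        add_nonneg (mul_nonneg (by linarith [h.2]) (θ.nonneg ω t)) (mul_nonneg h.1 (η.nonneg ω t))
      zero_of_neg := fun ω t ht => by
        show (1 - l) * θ.toFun ω t + l * η.toFun ω t = 0
        rw [θ.zero_of_neg ω t ht, η.zero_of_neg ω t ht]; ring }
  else θ

end SingularControl

/-- A control is admissible when it is adapted to the filtration `F` and
`∫_{[0,∞)} e^{-rt} dθ_t` is square-integrable. -/
def Admissible {Ω : Type*} {m : MeasurableSpace Ω} (F : Filtration ℝ m) (P : Measure Ω)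
    (r : ℝ) (θ : SingularControl Ω) : Prop :=
  Adapted F (fun t ω => θ.toFun ω t) ∧ (∫⁻ ω, (θ.discTotal r ω) ^ 2 ∂P) < ⊤

/-- The (pathwise, discounted) running cost `∫_0^∞ c(t, x+X_t, θ_t) e^{-rt} dt`. -/
def runCost {Ω : Type*} (c : ℝ → ℝ → ℝ → ℝ) (X : ℝ → Ω → ℝ) (x r : ℝ)
    (θ : SingularControl Ω) (ω : Ω) : ℝ :=
  ∫ t in Set.Ici (0:ℝ), c t (x + X t ω) (θ.toFun ω t) * Real.exp (-r * t)

/-- The (pathwise) intervention cost `∫_{[0,∞)} k_t e^{-rt} dθ_t`. -/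
def ctrlCost {Ω : Type*} (k : ℝ → Ω → ℝ) (r : ℝ) (θ : SingularControl Ω) (ω : Ω) : ℝ :=
  (∫⁻ t in Set.Ici (0:ℝ), ENNReal.ofReal (k t ω * Real.exp (-r * t)) ∂(θ.sf ω).measure).toReal

/-- The objective functional `J`. -/
def Jobj {Ω : Type*} {m : MeasurableSpace Ω} (P : Measure Ω) (c : ℝ → ℝ → ℝ → ℝ)
    (k : ℝ → Ω → ℝ) (X : ℝ → Ω → ℝ) (x r : ℝ) (θ : SingularControl Ω) : ℝ :=
  ∫ ω, (runCost c X x r θ ω + ctrlCost k r θ ω) ∂P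

/-- Finiteness (`J(θ) < ∞`) of the objective functional at `θ`. -/
def JFinite {Ω : Type*} {m : MeasurableSpace Ω} (P : Measure Ω) (c : ℝ → ℝ → ℝ → ℝ)
    (k : ℝ → Ω → ℝ) (X : ℝ → Ω → ℝ) (x r : ℝ) (θ : SingularControl Ω) : Prop :=
  (∀ᵐ ω ∂P, IntegrableOn (fun t => c t (x + X t ω) (θ.toFun ω t) * Real.exp (-r * t))
      (Set.Ici 0) volume) ∧
  Integrable (fun ω => runCost c X x r θ ω) P ∧
  (∫⁻ ω, (∫⁻ t in Set.Ici (0:ℝ),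
      ENNReal.ofReal (k t ω * Real.exp (-r * t)) ∂(θ.sf ω).measure) ∂P) < ⊤


section Aux

variable {Ω : Type*} [m : MeasurableSpace Ω]

open scoped Topology

/-- A process that is measurable in `ω` for each time and has right-continuous paths is
jointly measurable. -/
lemma measurable_uncurry_of_rightCont {f : ℝ → Ω → ℝ}
    (hm : ∀ t, Measurable (f t))
    (hrc : ∀ ω t, ContinuousWithinAt (fun s => f s ω) (Set.Ici t) t) :
    Measurable (fun p : Ω × ℝ => f p.2 p.1) := by
  have hg : ∀ n : ℕ, Measurable (fun p : Ω × ℝ => f ((⌈p.2 * 2 ^ n⌉ : ℤ) / 2 ^ n) p.1) := by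
    intro n
    have h1 : Measurable (fun q : Ω × ℤ => f ((q.2 : ℝ) / 2 ^ n) q.1) :=
      measurable_from_prod_countable_left (fun j => by simpa using hm ((j:ℝ)/2^n))
    exact h1.comp (measurable_fst.prodMk (Int.measurable_ceil.comp (measurable_snd.mul_const _)))
  refine measurable_of_tendsto_metrizable hg ?_
  rw [tendsto_pi_nhds]
  intro p
  obtain ⟨ω, t⟩ := p
  have h2n : ∀ n : ℕ, (0:ℝ) < 2 ^ n := fun n => by positivity
  set u : ℕ → ℝ := fun n => (⌈t * 2 ^ n⌉ : ℤ) / 2 ^ n with hu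
  have ht1 : ∀ n, t ≤ u n := by
    intro n
    rw [hu, le_div_iff₀ (h2n n)]
    exact Int.le_ceil _
  have ht2 : ∀ n, u n ≤ t + ((2:ℝ)⁻¹) ^ n := by
    intro n
    rw [hu, div_le_iff₀ (h2n n)]
    have h := (Int.ceil_lt_add_one (t * 2 ^ n)).le
    have h2 : ((2:ℝ)⁻¹) ^ n * 2 ^ n = 1 := by
      rw [← mul_pow]; norm_num
    nlinarith [h2n n]
  have htend : Tendsto u atTop (𝓝 t) := by
    refine tendsto_of_tendsto_of_tendsto_of_le_of_le tendsto_const_nhds ?_ ht1 ht2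
    have : Tendsto (fun n : ℕ => ((2:ℝ)⁻¹) ^ n) atTop (𝓝 0) :=
      tendsto_pow_atTop_nhds_zero_of_lt_one (by norm_num) (by norm_num)
    simpa using tendsto_const_nhds.add this
  exact (hrc ω t).tendsto.comp
    (tendsto_nhdsWithin_of_tendsto_nhds_of_eventually_within _ htend
      (Eventually.of_forall fun n => ht1 n))

namespace SingularControl

lemma tendsto_sf_atBot (θ : SingularControl Ω) (ω : Ω) :
    Tendsto (θ.sf ω) atBot (𝓝 0) := by
  have h : (fun _ => (0:ℝ)) =ᶠ[atBot] θ.sf ω := by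
    refine eventually_atBot.2 ⟨-1, fun b hb => ?_⟩
    exact (θ.zero_of_neg ω b (by linarith)).symm
  exact Tendsto.congr' h tendsto_const_nhds

lemma sf_measure_Iic' (θ : SingularControl Ω) (ω : Ω) (t : ℝ) :
    (θ.sf ω).measure (Set.Iic t) = ENNReal.ofReal (θ.toFun ω t) := by
  rw [StieltjesFunction.measure_Iic _ (θ.tendsto_sf_atBot ω), sub_zero]
  rfl

lemma sf_measure_Iio_zero (θ : SingularControl Ω) (ω : Ω) :
    (θ.sf ω).measure (Set.Iio 0) = 0 := by
  have hsub : Set.Iio (0:ℝ) ⊆ ⋃ n : ℕ, Set.Iic (-((n:ℝ)+1)⁻¹) := by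
    intro s hs
    have hs0 : s < 0 := hs
    have hpos : (0:ℝ) < -s := by linarith
    obtain ⟨n, hn⟩ := exists_nat_gt (-s)⁻¹
    refine Set.mem_iUnion.2 ⟨n, ?_⟩
    have h1 : (-s)⁻¹ < (n:ℝ) + 1 := by linarith
    have h2 : ((n:ℝ)+1)⁻¹ < -s := by
      have := (inv_strictAnti₀ (inv_pos.2 hpos) h1)
      rwa [inv_inv] at this
    simp only [Set.mem_Iic]
    linarith
  refine le_antisymm ?_ zero_le
  calc (θ.sf ω).measure (Set.Iio 0) ≤ (θ.sf ω).measure (⋃ n : ℕ, Set.Iic (-((n:ℝ)+1)⁻¹)) :=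
        measure_mono hsub
    _ ≤ ∑' n : ℕ, (θ.sf ω).measure (Set.Iic (-((n:ℝ)+1)⁻¹)) := measure_iUnion_le _
    _ = 0 := by
        have : ∀ n : ℕ, (θ.sf ω).measure (Set.Iic (-((n:ℝ)+1)⁻¹)) = 0 := by
          intro n
          have hneg : -((n:ℝ)+1)⁻¹ < 0 := by
            have : (0:ℝ) < ((n:ℝ)+1)⁻¹ := by positivity
            linarith
          rw [θ.sf_measure_Iic', θ.zero_of_neg ω _ hneg, ENNReal.ofReal_zero]
        simp [this]

lemma measurable_restrict_apply (θ : SingularControl Ω)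
    (hθm : ∀ t : ℝ, Measurable fun ω => θ.toFun ω t) (n : ℕ) {s : Set ℝ}
    (hs : MeasurableSet s) :
    Measurable fun ω => (θ.sf ω).measure.restrict (Set.Iic (n:ℝ)) s := by
  have h_eq : (inferInstance : MeasurableSpace ℝ)
      = MeasurableSpace.generateFrom (Set.range Set.Iic) := by
    rw [BorelSpace.measurable_eq (α := ℝ)]; exact borel_eq_generateFrom_Iic ℝ
  refine MeasurableSpace.induction_on_inter
    (C := fun s _ => Measurable fun ω => (θ.sf ω).measure.restrict (Set.Iic (n:ℝ)) s)
    h_eq isPiSystem_Iic ?_ ?_ ?_ ?_ _ hs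
  · simp
  · rintro - ⟨a, rfl⟩
    have h : ∀ ω, (θ.sf ω).measure.restrict (Set.Iic (n:ℝ)) (Set.Iic a)
        = ENNReal.ofReal (θ.toFun ω (min a n)) := by
      intro ω
      rw [Measure.restrict_apply measurableSet_Iic, Set.Iic_inter_Iic, θ.sf_measure_Iic']
    simp_rw [h]
    exact ENNReal.measurable_ofReal.comp (hθm _)
  · intro t ht hmeas
    have h : ∀ ω, (θ.sf ω).measure.restrict (Set.Iic (n:ℝ)) tᶜ
        = ENNReal.ofReal (θ.toFun ω n) - (θ.sf ω).measure.restrict (Set.Iic (n:ℝ)) t := by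
      intro ω
      have hfin : (θ.sf ω).measure.restrict (Set.Iic (n:ℝ)) t ≠ ⊤ := by
        refine ((measure_mono (Set.subset_univ t)).trans_lt ?_).ne
        rw [Measure.restrict_apply_univ, θ.sf_measure_Iic']
        exact ENNReal.ofReal_lt_top
      rw [measure_compl ht hfin, Measure.restrict_apply_univ, θ.sf_measure_Iic']
    simp_rw [h]
    exact (ENNReal.measurable_ofReal.comp (hθm _)).sub hmeas
  · intro g hdisj hgm hgmeas
    have h : ∀ ω, (θ.sf ω).measure.restrict (Set.Iic (n:ℝ)) (⋃ i, g i)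
        = ∑' i, (θ.sf ω).measure.restrict (Set.Iic (n:ℝ)) (g i) :=
      fun ω => measure_iUnion hdisj hgm
    simp_rw [h]
    exact Measurable.ennreal_tsum hgmeas

lemma measurable_setLIntegral (θ : SingularControl Ω)
    (hθm : ∀ t : ℝ, Measurable fun ω => θ.toFun ω t)
    {f : Ω → ℝ → ℝ≥0∞} (hf : Measurable (Function.uncurry f)) :
    Measurable fun ω => ∫⁻ t in Set.Ici (0:ℝ), f ω t ∂(θ.sf ω).measure := by
  have hstep : ∀ n : ℕ, Measurable fun ω => ∫⁻ t in Set.Icc (0:ℝ) n, f ω t ∂(θ.sf ω).measure := by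
    intro n
    set c : Ω → ℝ≥0∞ := fun ω => ENNReal.ofReal (1 + θ.toFun ω n) with hcdef
    have hcm : Measurable c := ENNReal.measurable_ofReal.comp (measurable_const.add (hθm n))
    have hc0 : ∀ ω, c ω ≠ 0 := by
      intro ω
      simp only [hcdef, ne_eq, ENNReal.ofReal_eq_zero, not_le]
      linarith [θ.nonneg ω n]
    have hctop : ∀ ω, c ω ≠ ⊤ := fun ω => ENNReal.ofReal_ne_top
    have hbound : ∀ ω, (θ.sf ω).measure.restrict (Set.Iic (n:ℝ)) Set.univ ≤ c ω := by
      intro ω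
      rw [Measure.restrict_apply_univ, θ.sf_measure_Iic']
      exact ENNReal.ofReal_le_ofReal (by linarith)
    let κ : ProbabilityTheory.Kernel Ω ℝ :=
      { toFun := fun ω => (c ω)⁻¹ • ((θ.sf ω).measure.restrict (Set.Iic (n:ℝ)))
        measurable' := by
          refine Measure.measurable_of_measurable_coe _ (fun s hs => ?_)
          simp_rw [Measure.smul_apply, smul_eq_mul]
          exact (hcm.inv).mul (θ.measurable_restrict_apply hθm n hs) }
    have hκ_apply : ∀ ω, κ ω = (c ω)⁻¹ • ((θ.sf ω).measure.restrict (Set.Iic (n:ℝ))) :=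
      fun ω => rfl
    haveI : ProbabilityTheory.IsFiniteKernel κ := by
      refine ⟨⟨1, ENNReal.one_lt_top, fun ω => ?_⟩⟩
      rw [hκ_apply, Measure.smul_apply, smul_eq_mul]
      calc (c ω)⁻¹ * (θ.sf ω).measure.restrict (Set.Iic (n:ℝ)) Set.univ
          ≤ (c ω)⁻¹ * c ω := mul_le_mul_right (hbound ω) _
        _ = 1 := ENNReal.inv_mul_cancel (hc0 ω) (hctop ω)
    have hκint : ∀ ω, ∫⁻ t in Set.Icc (0:ℝ) n, f ω t ∂(θ.sf ω).measure
        = c ω * ∫⁻ t in Set.Icc (0:ℝ) n, f ω t ∂(κ ω) := by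
      intro ω
      rw [hκ_apply, Measure.restrict_smul, lintegral_smul_measure, smul_eq_mul, ← mul_assoc,
        ENNReal.mul_inv_cancel (hc0 ω) (hctop ω), one_mul,
        Measure.restrict_restrict measurableSet_Icc,
        Set.inter_eq_left.mpr (fun t ht => ht.2)]
    have hmeas : Measurable fun ω => ∫⁻ t in Set.Icc (0:ℝ) n, f ω t ∂(κ ω) :=
      Measurable.setLIntegral_kernel_prod_right hf measurableSet_Icc
    simp_rw [hκint]
    exact hcm.mul hmeas
  have hpt : ∀ ω, ∫⁻ t in Set.Ici (0:ℝ), f ω t ∂(θ.sf ω).measure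
      = ⨆ n : ℕ, ∫⁻ t in Set.Icc (0:ℝ) n, f ω t ∂(θ.sf ω).measure := by
    intro ω
    have hfm : Measurable (f ω) := hf.comp measurable_prodMk_left
    have hind : (Set.Ici (0:ℝ)).indicator (f ω)
        = fun t => ⨆ n : ℕ, (Set.Icc (0:ℝ) (n:ℝ)).indicator (f ω) t := by
      funext t
      by_cases ht : (0:ℝ) ≤ t
      · obtain ⟨n, hn⟩ := exists_nat_ge t
        rw [Set.indicator_of_mem (Set.mem_Ici.mpr ht)]
        refine le_antisymm (le_iSup_of_le n (le_of_eq (Set.indicator_of_mem (Set.mem_Icc.mpr ⟨ht, hn⟩) _).symm)) ?_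
        refine iSup_le fun j => ?_
        by_cases hj : t ∈ Set.Icc (0:ℝ) (j:ℝ)
        · rw [Set.indicator_of_mem hj]
        · rw [Set.indicator_of_notMem hj]; exact zero_le
      · rw [Set.indicator_of_notMem (fun hmem => ht (Set.mem_Ici.mp hmem))]
        have hz : ∀ j : ℕ, (Set.Icc (0:ℝ) (j:ℝ)).indicator (f ω) t = 0 :=
          fun j => Set.indicator_of_notMem (fun hmem => ht hmem.1) _
        simp [hz]
    have hmono : Monotone fun n : ℕ => (Set.Icc (0:ℝ) (n:ℝ)).indicator (f ω) := by
      intro a b hab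
      exact Set.indicator_le_indicator_of_subset
        (Set.Icc_subset_Icc_right (by exact_mod_cast hab)) (fun _ => zero_le)
    rw [← lintegral_indicator measurableSet_Ici, hind,
      lintegral_iSup (fun j => hfm.indicator measurableSet_Icc) hmono]
    simp_rw [lintegral_indicator measurableSet_Icc]
  simp_rw [hpt]
  exact Measurable.iSup hstep

lemma measurable_discTotal {r : ℝ} (θ : SingularControl Ω)
    (hθm : ∀ t : ℝ, Measurable fun ω => θ.toFun ω t) :
    Measurable (θ.discTotal r) :=
  θ.measurable_setLIntegral hθm
    (f := fun _ t => ENNReal.ofReal (Real.exp (-r * t)))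
    (ENNReal.measurable_ofReal.comp
      (Real.measurable_exp.comp (measurable_snd.const_mul (-r))))

end SingularControl

lemma lintegral_exp_Ici {r : ℝ} (hr : 0 < r) (a : ℝ) :
    ∫⁻ t in Set.Ici a, ENNReal.ofReal (Real.exp (-r * t))
      = ENNReal.ofReal (Real.exp (-r * a) / r) := by
  rw [← setLIntegral_congr (Ioi_ae_eq_Ici (a := a))]
  have hint : IntegrableOn (fun t : ℝ => Real.exp (-r * t)) (Set.Ioi a) volume :=
    exp_neg_integrableOn_Ioi a hr
  rw [← ofReal_integral_eq_lintegral_ofReal hint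
    (ae_of_all _ fun t => (Real.exp_pos _).le)]
  congr 1
  have hderiv : ∀ y ∈ Set.Ioi a,
      HasDerivAt (fun z : ℝ => -Real.exp (-r * z) / r) (Real.exp (-r * y)) y := by
    intro y _
    have h1 : HasDerivAt (fun z : ℝ => -r * z) (-r) y := by
      simpa using (hasDerivAt_id y).const_mul (-r)
    have h2 : HasDerivAt (fun z : ℝ => Real.exp (-r * z)) (Real.exp (-r * y) * (-r)) y :=
      (Real.hasDerivAt_exp _).comp y h1
    have heq : -(Real.exp (-r * y) * (-r)) / r = Real.exp (-r * y) := by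
      field_simp
    rw [← heq]
    exact (h2.neg).div_const r
  have hcont : ContinuousWithinAt (fun z : ℝ => -Real.exp (-r * z) / r) (Set.Ici a) a :=
    (((Real.continuous_exp.comp (continuous_const.mul continuous_id)).neg).div_const
      r).continuousWithinAt
  have htend : Tendsto (fun z : ℝ => -Real.exp (-r * z) / r) atTop (𝓝 0) := by
    have h1 : Tendsto (fun z : ℝ => -r * z) atTop atBot := by
      have := (tendsto_id (α := ℝ)).const_mul_atTop hr
      have h2 := tendsto_neg_atTop_atBot.comp this
      refine h2.congr fun z => ?_
      simp [neg_mul]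
    have h2 : Tendsto (fun z : ℝ => Real.exp (-r * z)) atTop (𝓝 0) :=
      Real.tendsto_exp_atBot.comp h1
    simpa using (h2.neg).div_const r
  rw [MeasureTheory.integral_Ioi_of_hasDerivAt_of_tendsto hcont hderiv hint htend]
  ring

lemma SingularControl.lintegral_path_le {r : ℝ} (hr : 0 < r)
    (θ : SingularControl Ω) (ω : Ω) :
    ∫⁻ t in Set.Ici (0:ℝ), ENNReal.ofReal (θ.toFun ω t * Real.exp (-r * t))
      ≤ ENNReal.ofReal r⁻¹ * θ.discTotal r ω := by
  set μ := (θ.sf ω).measure with hμ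
  have hF : Measurable (Function.uncurry fun t s : ℝ =>
      (Set.Iic t).indicator (fun _ => ENNReal.ofReal (Real.exp (-r * t))) s) := by
    have : (Function.uncurry fun t s : ℝ =>
        (Set.Iic t).indicator (fun _ => ENNReal.ofReal (Real.exp (-r * t))) s)
        = fun p : ℝ × ℝ => Set.indicator {q : ℝ × ℝ | q.2 ≤ q.1}
            (fun q => ENNReal.ofReal (Real.exp (-r * q.1))) p := by
      funext p
      simp only [Function.uncurry, Set.indicator_apply, Set.mem_Iic, Set.mem_setOf_eq]
    rw [this]
    exact Measurable.indicator
      (ENNReal.measurable_ofReal.comp (Real.measurable_exp.comp (measurable_fst.const_mul (-r))))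
      (measurableSet_le measurable_snd measurable_fst)
  have hstep1 : ∀ t : ℝ, ENNReal.ofReal (θ.toFun ω t * Real.exp (-r * t))
      = ∫⁻ s, (Set.Iic t).indicator (fun _ => ENNReal.ofReal (Real.exp (-r * t))) s ∂μ := by
    intro t
    rw [lintegral_indicator measurableSet_Iic, setLIntegral_const, hμ, θ.sf_measure_Iic',
      ← ENNReal.ofReal_mul (Real.exp_pos _).le, mul_comm (Real.exp (-r * t))]
  calc ∫⁻ t in Set.Ici (0:ℝ), ENNReal.ofReal (θ.toFun ω t * Real.exp (-r * t))
      = ∫⁻ t in Set.Ici (0:ℝ), ∫⁻ s, (Set.Iic t).indicator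
          (fun _ => ENNReal.ofReal (Real.exp (-r * t))) s ∂μ ∂volume := by
        simp_rw [hstep1]
    _ = ∫⁻ s, ∫⁻ t in Set.Ici (0:ℝ), (Set.Iic t).indicator
          (fun _ => ENNReal.ofReal (Real.exp (-r * t))) s ∂volume ∂μ :=
        lintegral_lintegral_swap hF.aemeasurable
    _ = ∫⁻ s, ENNReal.ofReal (Real.exp (-r * (s ⊔ 0)) / r) ∂μ := by
        refine lintegral_congr fun s => ?_
        have hswap : ∀ t : ℝ, (Set.Iic t).indicator
            (fun _ => ENNReal.ofReal (Real.exp (-r * t))) s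
            = (Set.Ici s).indicator (fun u => ENNReal.ofReal (Real.exp (-r * u))) t := by
          intro t
          simp only [Set.indicator_apply, Set.mem_Iic, Set.mem_Ici]
        simp_rw [hswap]
        rw [lintegral_indicator measurableSet_Ici,
          Measure.restrict_restrict measurableSet_Ici, Set.Ici_inter_Ici,
          lintegral_exp_Ici hr]
    _ ≤ ENNReal.ofReal r⁻¹ * θ.discTotal r ω := by
        rw [← lintegral_add_compl (fun s => ENNReal.ofReal (Real.exp (-r * (s ⊔ 0)) / r))
          (measurableSet_Ici (a := (0:ℝ))), Set.compl_Ici, setLIntegral_measure_zero _ _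
          (θ.sf_measure_Iio_zero ω), add_zero]
        have hcong : ∀ s ∈ Set.Ici (0:ℝ), ENNReal.ofReal (Real.exp (-r * (s ⊔ 0)) / r)
            = ENNReal.ofReal r⁻¹ * ENNReal.ofReal (Real.exp (-r * s)) := by
          intro s hs
          rw [sup_eq_left.mpr hs, div_eq_mul_inv, mul_comm,
            ENNReal.ofReal_mul (by positivity)]
        rw [setLIntegral_congr_fun measurableSet_Ici hcong,
          lintegral_const_mul' _ _ ENNReal.ofReal_ne_top]
        exact le_of_eq (by rfl)

lemma SingularControl.comb_toFun_eq (θ η : SingularControl Ω) {l : ℝ}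
    (hl : 0 ≤ l ∧ l ≤ 1) (ω : Ω) (t : ℝ) :
    (SingularControl.comb θ η l).toFun ω t
      = (1 - l) * θ.toFun ω t + l * η.toFun ω t := by
  rw [SingularControl.comb, dif_pos hl]

lemma SingularControl.comb_sf_measure (θ η : SingularControl Ω) {l : ℝ}
    (hl0 : 0 ≤ l) (hl1 : l ≤ 1) (ω : Ω) :
    ((SingularControl.comb θ η l).sf ω).measure
      = ENNReal.ofReal (1 - l) • (θ.sf ω).measure + ENNReal.ofReal l • (η.sf ω).measure := by
  refine Measure.ext_of_Ioc _ _ (fun a b hab => ?_)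
  rw [StieltjesFunction.measure_Ioc, Measure.add_apply, Measure.smul_apply,
    Measure.smul_apply, StieltjesFunction.measure_Ioc, StieltjesFunction.measure_Ioc,
    smul_eq_mul, smul_eq_mul]
  have hsf : ∀ (ψ : SingularControl Ω) (u : ℝ), (ψ.sf ω) u = ψ.toFun ω u := fun _ _ => rfl
  rw [hsf, hsf, hsf, hsf, hsf, hsf,
    SingularControl.comb_toFun_eq θ η ⟨hl0, hl1⟩ ω b,
    SingularControl.comb_toFun_eq θ η ⟨hl0, hl1⟩ ω a,
    ← ENNReal.ofReal_mul (by linarith), ← ENNReal.ofReal_mul hl0,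
    ← ENNReal.ofReal_add
      (mul_nonneg (by linarith) (sub_nonneg.mpr (θ.mono ω hab.le)))
      (mul_nonneg hl0 (sub_nonneg.mpr (η.mono ω hab.le)))]
  ring_nf

end Aux

/-- Proposition: Gâteaux/directional derivative of `J`.
For admissible controls `θ, η` with `J(θ) < ∞`, the directional derivative of `J` at `θ`
in the direction `η - θ` (along `θ^λ = (1-λ)θ + λη`, `λ ↓ 0`) exists and equals
`E[∫_0^∞ c_θ(t, x+X_t, θ_t)(η_t - θ_t) e^{-rt} dt] + E[∫ k e^{-rt} dη] - E[∫ k e^{-rt} dθ]`. -/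
theorem directional_derivative_of_J
    {Ω : Type*} [m : MeasurableSpace Ω] (P : Measure Ω) [IsProbabilityMeasure P]
    -- the driving process
    (X : ℝ → Ω → ℝ)
    (hXmeas : Measurable (Function.uncurry X))
    (hXsm : ∀ t, StronglyMeasurable (X t))
    (hX0 : ∀ᵐ ω ∂P, X 0 ω = 0)
    (hXrc : ∀ ω t, ContinuousWithinAt (fun s => X s ω) (Set.Ici t) t)
    (hXll : ∀ ω t, ∃ L, Tendsto (fun s => X s ω) (nhdsWithin t (Set.Iio t)) (nhds L))
    (x r : ℝ) (hr : 0 < r)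
    -- the intervention cost process
    (k : ℝ → Ω → ℝ)
    (hkadapt : Adapted (Filtration.natural X hXsm) k)
    (hknn : ∀ t ω, 0 ≤ k t ω)
    (hkrc : ∀ ω t, ContinuousWithinAt (fun s => k s ω) (Set.Ici t) t)
    (hkbdd : ∀ ω, BddAbove (Set.range fun t : ℝ≥0 => k (t : ℝ) ω))
    (hkL2 : Integrable (fun ω => (⨆ t : ℝ≥0, k (t : ℝ) ω) ^ 2) P)
    -- the running cost function and its `θ`-derivative
    (c c' : ℝ → ℝ → ℝ → ℝ)
    (hcmeas : Measurable fun p : ℝ × ℝ × ℝ => c p.1 p.2.1 p.2.2)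
    (hcderiv : ∀ t x' y, HasDerivAt (fun z => c t x' z) (c' t x' y) y)
    (hc'cont : ∀ t x', Continuous (c' t x'))
    (hc'mono : ∀ t x', StrictMono (c' t x'))
    (hc'bdd : ∃ M, ∀ t x' y, |c' t x' y| ≤ M)
    -- the controls
    (θ η : SingularControl Ω)
    (hθ : Admissible (Filtration.natural X hXsm) P r θ)
    (hη : Admissible (Filtration.natural X hXsm) P r η)
    (hJθ : JFinite P c k X x r θ) :
    Tendsto
      (fun l : ℝ => (Jobj P c k X x r (SingularControl.comb θ η l) - Jobj P c k X x r θ) / l)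
      (nhdsWithin 0 (Set.Ioi 0))
      (nhds ((∫ ω, (∫ t in Set.Ici (0:ℝ),
            c' t (x + X t ω) (θ.toFun ω t) * (η.toFun ω t - θ.toFun ω t) * Real.exp (-r * t)) ∂P)
        + (∫ ω, ctrlCost k r η ω ∂P) - (∫ ω, ctrlCost k r θ ω ∂P))) := by
  classical
  obtain ⟨M, hM⟩ := hc'bdd
  have hM0 : 0 ≤ M := le_trans (abs_nonneg _) (hM 0 0 0)
  have H01 : (0:ℝ) ∈ Set.Ico (0:ℝ) 1 := ⟨le_rfl, one_pos⟩
  -- measurability of paths in ω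
  have hθm : ∀ t : ℝ, Measurable fun ω => θ.toFun ω t := fun t =>
    (hθ.1 t).mono ((Filtration.natural X hXsm).le t) le_rfl
  have hηm : ∀ t : ℝ, Measurable fun ω => η.toFun ω t := fun t =>
    (hη.1 t).mono ((Filtration.natural X hXsm).le t) le_rfl
  have hkm : ∀ t : ℝ, Measurable (k t) := fun t =>
    (hkadapt t).mono ((Filtration.natural X hXsm).le t) le_rfl
  -- joint measurability
  have hθj : Measurable fun p : Ω × ℝ => θ.toFun p.1 p.2 :=
    measurable_uncurry_of_rightCont (f := fun t ω => θ.toFun ω t) hθm (fun ω t => θ.rightCont ω t)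
  have hηj : Measurable fun p : Ω × ℝ => η.toFun p.1 p.2 :=
    measurable_uncurry_of_rightCont (f := fun t ω => η.toFun ω t) hηm (fun ω t => η.rightCont ω t)
  have hkj : Measurable fun p : Ω × ℝ => k p.2 p.1 :=
    measurable_uncurry_of_rightCont hkm hkrc
  have hXj : Measurable fun p : Ω × ℝ => X p.2 p.1 :=
    hXmeas.comp (measurable_snd.prodMk measurable_fst)
  have hexpm : Measurable fun t : ℝ => Real.exp (-r * t) :=
    Real.measurable_exp.comp (measurable_id.const_mul (-r))
  -- joint measurability of the paths of convex combinations
  have hcombj : ∀ l : ℝ, Measurable fun p : Ω × ℝ => (SingularControl.comb θ η l).toFun p.1 p.2 := by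
    intro l
    by_cases hl : 0 ≤ l ∧ l ≤ 1
    · have he : (fun p : Ω × ℝ => (SingularControl.comb θ η l).toFun p.1 p.2)
          = fun p : Ω × ℝ => (1 - l) * θ.toFun p.1 p.2 + l * η.toFun p.1 p.2 :=
        funext fun p => SingularControl.comb_toFun_eq θ η hl p.1 p.2
      rw [he]
      exact (hθj.const_mul _).add (hηj.const_mul _)
    · have he : SingularControl.comb θ η l = θ := by rw [SingularControl.comb, dif_neg hl]
      rw [he]; exact hθj
  -- measurability of runCost
  have hRmeas : ∀ ψ : SingularControl Ω, (Measurable fun p : Ω × ℝ => ψ.toFun p.1 p.2) →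
      StronglyMeasurable (fun ω => runCost c X x r ψ ω) := by
    intro ψ hψj
    have hint : StronglyMeasurable fun p : Ω × ℝ =>
        c p.2 (x + X p.2 p.1) (ψ.toFun p.1 p.2) * Real.exp (-r * p.2) :=
      ((hcmeas.comp (measurable_snd.prodMk
        ((measurable_const.add hXj).prodMk hψj))).mul
        (hexpm.comp measurable_snd)).stronglyMeasurable
    exact hint.integral_prod_right'
  -- measurability of the control-cost lintegrals
  have hkexpm : Measurable (Function.uncurry fun (ω : Ω) (t : ℝ) =>
      ENNReal.ofReal (k t ω * Real.exp (-r * t))) :=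
    ENNReal.measurable_ofReal.comp (hkj.mul (hexpm.comp measurable_snd))
  have hFθmeas : Measurable fun ω => ∫⁻ t in Set.Ici (0:ℝ),
      ENNReal.ofReal (k t ω * Real.exp (-r * t)) ∂(θ.sf ω).measure :=
    θ.measurable_setLIntegral hθm hkexpm
  have hFηmeas : Measurable fun ω => ∫⁻ t in Set.Ici (0:ℝ),
      ENNReal.ofReal (k t ω * Real.exp (-r * t)) ∂(η.sf ω).measure :=
    η.measurable_setLIntegral hηm hkexpm
  have hDθmeas : Measurable (θ.discTotal r) := θ.measurable_discTotal hθm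
  have hDηmeas : Measurable (η.discTotal r) := η.measurable_discTotal hηm
  -- finiteness of the control-cost lintegral for θ
  have hFθfin : (∫⁻ ω, (∫⁻ t in Set.Ici (0:ℝ),
      ENNReal.ofReal (k t ω * Real.exp (-r * t)) ∂(θ.sf ω).measure) ∂P) ≠ ⊤ := hJθ.2.2.ne
  have hCθint : Integrable (fun ω => ctrlCost k r θ ω) P :=
    integrable_toReal_of_lintegral_ne_top hFθmeas.aemeasurable hFθfin
  -- finiteness of the control-cost lintegral for η
  have hkleK : ∀ t : ℝ, 0 ≤ t → ∀ ω, k t ω ≤ ⨆ s : ℝ≥0, k (s:ℝ) ω := by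
    intro t ht ω
    have h := le_ciSup (hkbdd ω) (⟨t, ht⟩ : ℝ≥0)
    exact h
  have hKnn : ∀ ω, 0 ≤ ⨆ s : ℝ≥0, k (s:ℝ) ω :=
    fun ω => le_trans (hknn 0 ω) (by simpa using hkleK 0 le_rfl ω)
  have hFηle : ∀ ω, (∫⁻ t in Set.Ici (0:ℝ),
      ENNReal.ofReal (k t ω * Real.exp (-r * t)) ∂(η.sf ω).measure)
      ≤ ENNReal.ofReal ((⨆ s : ℝ≥0, k (s:ℝ) ω)^2) + (η.discTotal r ω)^2 := by
    intro ω
    have h1 : (∫⁻ t in Set.Ici (0:ℝ),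
        ENNReal.ofReal (k t ω * Real.exp (-r * t)) ∂(η.sf ω).measure)
        ≤ ENNReal.ofReal (⨆ s : ℝ≥0, k (s:ℝ) ω) * η.discTotal r ω := by
      calc (∫⁻ t in Set.Ici (0:ℝ),
          ENNReal.ofReal (k t ω * Real.exp (-r * t)) ∂(η.sf ω).measure)
          ≤ ∫⁻ t in Set.Ici (0:ℝ), ENNReal.ofReal (⨆ s : ℝ≥0, k (s:ℝ) ω)
            * ENNReal.ofReal (Real.exp (-r * t)) ∂(η.sf ω).measure := by
            refine setLIntegral_mono' measurableSet_Ici (fun t ht => ?_)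
            rw [← ENNReal.ofReal_mul (hKnn ω)]
            exact ENNReal.ofReal_le_ofReal
              (mul_le_mul_of_nonneg_right (hkleK t ht ω) (Real.exp_pos _).le)
        _ = ENNReal.ofReal (⨆ s : ℝ≥0, k (s:ℝ) ω) * η.discTotal r ω := by
            rw [lintegral_const_mul' _ _ ENNReal.ofReal_ne_top]
            rfl
    refine h1.trans ?_
    rcases le_total (ENNReal.ofReal (⨆ s : ℝ≥0, k (s:ℝ) ω)) (η.discTotal r ω) with h | h
    · calc ENNReal.ofReal (⨆ s : ℝ≥0, k (s:ℝ) ω) * η.discTotal r ω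
          ≤ η.discTotal r ω * η.discTotal r ω := mul_le_mul_left h _
        _ = (η.discTotal r ω)^2 := (sq _).symm
        _ ≤ _ := le_add_self
    · calc ENNReal.ofReal (⨆ s : ℝ≥0, k (s:ℝ) ω) * η.discTotal r ω
          ≤ ENNReal.ofReal (⨆ s : ℝ≥0, k (s:ℝ) ω) * ENNReal.ofReal (⨆ s : ℝ≥0, k (s:ℝ) ω) :=
            mul_le_mul_right h _
        _ = ENNReal.ofReal ((⨆ s : ℝ≥0, k (s:ℝ) ω)^2) := by
            rw [← ENNReal.ofReal_mul (hKnn ω), sq]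
        _ ≤ _ := le_self_add
  have hFηfin : (∫⁻ ω, (∫⁻ t in Set.Ici (0:ℝ),
      ENNReal.ofReal (k t ω * Real.exp (-r * t)) ∂(η.sf ω).measure) ∂P) ≠ ⊤ := by
    refine ne_top_of_le_ne_top ?_ (lintegral_mono hFηle)
    rw [lintegral_add_left' hkL2.1.aemeasurable.ennreal_ofReal _]
    refine ENNReal.add_ne_top.mpr ⟨?_, ?_⟩
    · have heq : (fun ω => ENNReal.ofReal ((⨆ s : ℝ≥0, k (s:ℝ) ω)^2))
          = fun ω => ‖(⨆ s : ℝ≥0, k (s:ℝ) ω)^2‖ₑ := by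
        funext ω; rw [Real.enorm_eq_ofReal (sq_nonneg _)]
      rw [heq]
      exact hkL2.2.ne
    · exact hη.2.ne
  have hCηint : Integrable (fun ω => ctrlCost k r η ω) P :=
    integrable_toReal_of_lintegral_ne_top hFηmeas.aemeasurable hFηfin
  -- a.e. finiteness
  have hpow2 : ∀ {a : ℝ≥0∞}, a ^ 2 < ⊤ → a < ⊤ := by
    intro a h
    rw [lt_top_iff_ne_top] at h ⊢
    intro htop
    exact h (by rw [htop]; simp)
  have hDθae : ∀ᵐ ω ∂P, θ.discTotal r ω < ⊤ := by
    filter_upwards [ae_lt_top (hDθmeas.pow_const 2) hθ.2.ne] with ω h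
    exact hpow2 h
  have hDηae : ∀ᵐ ω ∂P, η.discTotal r ω < ⊤ := by
    filter_upwards [ae_lt_top (hDηmeas.pow_const 2) hη.2.ne] with ω h
    exact hpow2 h
  have hFθae : ∀ᵐ ω ∂P, (∫⁻ t in Set.Ici (0:ℝ),
      ENNReal.ofReal (k t ω * Real.exp (-r * t)) ∂(θ.sf ω).measure) < ⊤ :=
    ae_lt_top hFθmeas hFθfin
  have hFηae : ∀ᵐ ω ∂P, (∫⁻ t in Set.Ici (0:ℝ),
      ENNReal.ofReal (k t ω * Real.exp (-r * t)) ∂(η.sf ω).measure) < ⊤ :=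
    ae_lt_top hFηmeas hFηfin
  -- derivative of the composed running cost, and the MVT estimate
  have hderivcomp : ∀ (t x' a d u : ℝ),
      HasDerivAt (fun v : ℝ => c t x' (a + v * d)) (c' t x' (a + u * d) * d) u := by
    intro t x' a d u
    have h1 : HasDerivAt (fun v : ℝ => a + v * d) d u := by
      simpa using ((hasDerivAt_id u).mul_const d).const_add a
    exact (hcderiv t x' (a + u * d)).comp u h1
  have hMVT : ∀ (t x' a d l : ℝ), 0 ≤ l → |c t x' (a + l * d) - c t x' a| ≤ M * |d| * l := by
    intro t x' a d l hl
    have key := norm_image_sub_le_of_norm_deriv_le_segment'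
      (f := fun u : ℝ => c t x' (a + u * d)) (f' := fun u : ℝ => c' t x' (a + u * d) * d)
      (a := 0) (b := l)
      (fun u _ => (hderivcomp t x' a d u).hasDerivWithinAt)
      (fun u _ => by
        rw [Real.norm_eq_abs, abs_mul]
        exact mul_le_mul_of_nonneg_right (hM _ _ _) (abs_nonneg d))
      l (Set.right_mem_Icc.mpr hl)
    rw [Real.norm_eq_abs] at key
    simpa using key
  have hcombt : ∀ {l : ℝ}, 0 ≤ l → l ≤ 1 → ∀ (ω : Ω) (t : ℝ),
      (SingularControl.comb θ η l).toFun ω t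
        = θ.toFun ω t + l * (η.toFun ω t - θ.toFun ω t) := by
    intro l h0 h1 ω t
    rw [SingularControl.comb_toFun_eq θ η ⟨h0, h1⟩]; ring
  -- pointwise bound on the increment
  have hΔbd : ∀ (ω : Ω) (l : ℝ), 0 ≤ l → ∀ t : ℝ,
      |(c t (x + X t ω) (θ.toFun ω t + l * (η.toFun ω t - θ.toFun ω t))
        - c t (x + X t ω) (θ.toFun ω t)) * Real.exp (-r * t)|
      ≤ l * (M * ((θ.toFun ω t + η.toFun ω t) * Real.exp (-r * t))) := by
    intro ω l hl t
    rw [abs_mul, abs_of_pos (Real.exp_pos _)]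
    have h1 := hMVT t (x + X t ω) (θ.toFun ω t) (η.toFun ω t - θ.toFun ω t) l hl
    have h2 : |η.toFun ω t - θ.toFun ω t| ≤ θ.toFun ω t + η.toFun ω t := by
      have h := abs_sub (η.toFun ω t) (θ.toFun ω t)
      rw [abs_of_nonneg (η.nonneg ω t), abs_of_nonneg (θ.nonneg ω t)] at h
      linarith
    have h3 : M * |η.toFun ω t - θ.toFun ω t| * l ≤ M * (θ.toFun ω t + η.toFun ω t) * l :=
      mul_le_mul_of_nonneg_right (mul_le_mul_of_nonneg_left h2 hM0) hl
    calc |c t (x + X t ω) (θ.toFun ω t + l * (η.toFun ω t - θ.toFun ω t))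
        - c t (x + X t ω) (θ.toFun ω t)| * Real.exp (-r * t)
        ≤ M * (θ.toFun ω t + η.toFun ω t) * l * Real.exp (-r * t) :=
          mul_le_mul_of_nonneg_right (h1.trans h3) (Real.exp_pos _).le
      _ = l * (M * ((θ.toFun ω t + η.toFun ω t) * Real.exp (-r * t))) := by ring
  -- integrability of the dominating path functional
  have hbtint : ∀ ω : Ω, θ.discTotal r ω < ⊤ → η.discTotal r ω < ⊤ →
      IntegrableOn (fun t => (θ.toFun ω t + η.toFun ω t) * Real.exp (-r * t))
        (Set.Ici 0) volume ∧
      (∫ t in Set.Ici (0:ℝ), (θ.toFun ω t + η.toFun ω t) * Real.exp (-r * t))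
        ≤ (ENNReal.ofReal r⁻¹ * (θ.discTotal r ω + η.discTotal r ω)).toReal := by
    intro ω h4 h5
    have hmeas : Measurable fun t => (θ.toFun ω t + η.toFun ω t) * Real.exp (-r * t) :=
      ((θ.mono ω).measurable.add (η.mono ω).measurable).mul hexpm
    have hnn : ∀ t, 0 ≤ (θ.toFun ω t + η.toFun ω t) * Real.exp (-r * t) :=
      fun t => mul_nonneg (add_nonneg (θ.nonneg ω t) (η.nonneg ω t)) (Real.exp_pos _).le
    have hlin : (∫⁻ t in Set.Ici (0:ℝ),
        ENNReal.ofReal ((θ.toFun ω t + η.toFun ω t) * Real.exp (-r * t)))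
        ≤ ENNReal.ofReal r⁻¹ * (θ.discTotal r ω + η.discTotal r ω) := by
      have hsplit : ∀ t : ℝ, ENNReal.ofReal ((θ.toFun ω t + η.toFun ω t) * Real.exp (-r * t))
          = ENNReal.ofReal (θ.toFun ω t * Real.exp (-r * t))
            + ENNReal.ofReal (η.toFun ω t * Real.exp (-r * t)) := by
        intro t
        rw [← ENNReal.ofReal_add (mul_nonneg (θ.nonneg ω t) (Real.exp_pos _).le)
          (mul_nonneg (η.nonneg ω t) (Real.exp_pos _).le), add_mul]
      simp_rw [hsplit]
      rw [lintegral_add_left (f := fun t => ENNReal.ofReal (θ.toFun ω t * Real.exp (-r * t)))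
        ((θ.mono ω).measurable.mul hexpm).ennreal_ofReal, mul_add]
      exact add_le_add (θ.lintegral_path_le hr ω) (η.lintegral_path_le hr ω)
    have hfintop : ENNReal.ofReal r⁻¹ * (θ.discTotal r ω + η.discTotal r ω) ≠ ⊤ :=
      ENNReal.mul_ne_top ENNReal.ofReal_ne_top (ENNReal.add_lt_top.mpr ⟨h4, h5⟩).ne
    have hfin : (∫⁻ t in Set.Ici (0:ℝ),
        ENNReal.ofReal ((θ.toFun ω t + η.toFun ω t) * Real.exp (-r * t))) < ⊤ :=
      hlin.trans_lt (lt_top_iff_ne_top.mpr hfintop)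
    constructor
    · refine ⟨hmeas.aestronglyMeasurable, ?_⟩
      rw [hasFiniteIntegral_iff_ofReal (ae_of_all _ hnn)]
      exact hfin
    · rw [integral_eq_lintegral_of_nonneg_ae (ae_of_all _ hnn) hmeas.aestronglyMeasurable]
      exact ENNReal.toReal_mono hfintop hlin
  -- the pathwise expansion of the running cost along the convex combination
  have hΔ : ∀ ω : Ω,
      IntegrableOn (fun t => c t (x + X t ω) (θ.toFun ω t) * Real.exp (-r * t))
        (Set.Ici 0) volume →
      IntegrableOn (fun t => (θ.toFun ω t + η.toFun ω t) * Real.exp (-r * t))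
        (Set.Ici 0) volume →
      ∀ l : ℝ, l ∈ Set.Ioo (0:ℝ) 1 →
      IntegrableOn (fun t => (c t (x + X t ω) (θ.toFun ω t + l * (η.toFun ω t - θ.toFun ω t))
          - c t (x + X t ω) (θ.toFun ω t)) * Real.exp (-r * t)) (Set.Ici 0) volume ∧
      runCost c X x r (SingularControl.comb θ η l) ω - runCost c X x r θ ω
        = ∫ t in Set.Ici (0:ℝ), (c t (x + X t ω) (θ.toFun ω t + l * (η.toFun ω t - θ.toFun ω t))
            - c t (x + X t ω) (θ.toFun ω t)) * Real.exp (-r * t) := by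
    intro ω hI hbt l hl
    have hXp : Measurable fun t : ℝ => X t ω :=
      hXmeas.comp (measurable_id.prodMk measurable_const)
    have hθp : Measurable (θ.toFun ω) := (θ.mono ω).measurable
    have hηp : Measurable (η.toFun ω) := (η.mono ω).measurable
    have hc1 : Measurable fun t => c t (x + X t ω)
        (θ.toFun ω t + l * (η.toFun ω t - θ.toFun ω t)) :=
      hcmeas.comp (measurable_id.prodMk ((measurable_const.add hXp).prodMk
        (hθp.add ((hηp.sub hθp).const_mul l))))
    have hc0 : Measurable fun t => c t (x + X t ω) (θ.toFun ω t) :=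
      hcmeas.comp (measurable_id.prodMk ((measurable_const.add hXp).prodMk hθp))
    have hΔmeas : Measurable fun t =>
        (c t (x + X t ω) (θ.toFun ω t + l * (η.toFun ω t - θ.toFun ω t))
          - c t (x + X t ω) (θ.toFun ω t)) * Real.exp (-r * t) :=
      (hc1.sub hc0).mul hexpm
    have hΔint : IntegrableOn (fun t =>
        (c t (x + X t ω) (θ.toFun ω t + l * (η.toFun ω t - θ.toFun ω t))
          - c t (x + X t ω) (θ.toFun ω t)) * Real.exp (-r * t)) (Set.Ici 0) volume := by
      refine Integrable.mono' ((hbt.const_mul M).const_mul l)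
        hΔmeas.aestronglyMeasurable (ae_of_all _ fun t => ?_)
      rw [Real.norm_eq_abs]
      exact hΔbd ω l hl.1.le t
    refine ⟨hΔint, ?_⟩
    have hfun : (fun t => c t (x + X t ω) ((SingularControl.comb θ η l).toFun ω t)
          * Real.exp (-r * t))
        = fun t => c t (x + X t ω) (θ.toFun ω t) * Real.exp (-r * t)
          + (c t (x + X t ω) (θ.toFun ω t + l * (η.toFun ω t - θ.toFun ω t))
            - c t (x + X t ω) (θ.toFun ω t)) * Real.exp (-r * t) := by
      funext t
      rw [hcombt hl.1.le hl.2.le]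
      ring
    have hRθ : runCost c X x r θ ω
        = ∫ t in Set.Ici (0:ℝ), c t (x + X t ω) (θ.toFun ω t) * Real.exp (-r * t) := rfl
    have h5 : runCost c X x r (SingularControl.comb θ η l) ω
        = (∫ t in Set.Ici (0:ℝ), c t (x + X t ω) (θ.toFun ω t) * Real.exp (-r * t))
          + ∫ t in Set.Ici (0:ℝ),
            (c t (x + X t ω) (θ.toFun ω t + l * (η.toFun ω t - θ.toFun ω t))
              - c t (x + X t ω) (θ.toFun ω t)) * Real.exp (-r * t) := by
      show (∫ t in Set.Ici (0:ℝ), c t (x + X t ω)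
          ((SingularControl.comb θ η l).toFun ω t) * Real.exp (-r * t)) = _
      rw [hfun, integral_add hI hΔint]
    rw [h5, hRθ]
    ring
  -- the a.e. bound for the difference of the running costs
  have hAbd : ∀ l : ℝ, l ∈ Set.Ioo (0:ℝ) 1 → ∀ᵐ ω ∂P,
      |runCost c X x r (SingularControl.comb θ η l) ω - runCost c X x r θ ω|
        ≤ l * (M * (ENNReal.ofReal r⁻¹
          * (θ.discTotal r ω + η.discTotal r ω)).toReal) := by
    intro l hl
    filter_upwards [hJθ.1, hDθae, hDηae] with ω h1 h4 h5
    obtain ⟨hbtI, hbtle⟩ := hbtint ω h4 h5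
    obtain ⟨hΔint, hdiff⟩ := hΔ ω h1 hbtI l hl
    rw [hdiff]
    have habs : |∫ t in Set.Ici (0:ℝ),
        (c t (x + X t ω) (θ.toFun ω t + l * (η.toFun ω t - θ.toFun ω t))
          - c t (x + X t ω) (θ.toFun ω t)) * Real.exp (-r * t)|
        ≤ ∫ t in Set.Ici (0:ℝ), |(c t (x + X t ω)
          (θ.toFun ω t + l * (η.toFun ω t - θ.toFun ω t))
          - c t (x + X t ω) (θ.toFun ω t)) * Real.exp (-r * t)| := by
      simpa only [Real.norm_eq_abs] using norm_integral_le_integral_norm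
        (μ := volume.restrict (Set.Ici (0:ℝ)))
        (fun t => (c t (x + X t ω) (θ.toFun ω t + l * (η.toFun ω t - θ.toFun ω t))
          - c t (x + X t ω) (θ.toFun ω t)) * Real.exp (-r * t))
    refine habs.trans ?_
    calc (∫ t in Set.Ici (0:ℝ), |(c t (x + X t ω)
          (θ.toFun ω t + l * (η.toFun ω t - θ.toFun ω t))
          - c t (x + X t ω) (θ.toFun ω t)) * Real.exp (-r * t)|)
        ≤ ∫ t in Set.Ici (0:ℝ),
            l * (M * ((θ.toFun ω t + η.toFun ω t) * Real.exp (-r * t))) := by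
          refine integral_mono hΔint.abs ((hbtI.const_mul M).const_mul l)
            (fun t => hΔbd ω l hl.1.le t)
      _ = l * (M * ∫ t in Set.Ici (0:ℝ),
            (θ.toFun ω t + η.toFun ω t) * Real.exp (-r * t)) := by
          rw [integral_const_mul, integral_const_mul]
      _ ≤ l * (M * (ENNReal.ofReal r⁻¹
            * (θ.discTotal r ω + η.discTotal r ω)).toReal) := by
          refine mul_le_mul_of_nonneg_left
            (mul_le_mul_of_nonneg_left hbtle hM0) hl.1.le
  -- integrability of the dominating random variable
  have hboundint : Integrable (fun ω => M * (ENNReal.ofReal r⁻¹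
      * (θ.discTotal r ω + η.discTotal r ω)).toReal) P := by
    refine Integrable.const_mul ?_ M
    refine integrable_toReal_of_lintegral_ne_top
      ((measurable_const.mul (hDθmeas.add hDηmeas)).aemeasurable) ?_
    rw [lintegral_const_mul' _ _ ENNReal.ofReal_ne_top, lintegral_add_left hDθmeas]
    have hsq : ∀ a : ℝ≥0∞, a ≤ a ^ 2 + 1 := by
      intro a
      rcases le_total a 1 with h | h
      · exact h.trans le_add_self
      · calc a = a * 1 := (mul_one a).symm
          _ ≤ a * a := mul_le_mul_right h a
          _ = a ^ 2 := (sq a).symm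
          _ ≤ _ := le_self_add
    have h1 : (∫⁻ ω, θ.discTotal r ω ∂P) ≠ ⊤ := by
      refine ne_top_of_le_ne_top ?_ (lintegral_mono fun ω => hsq _)
      rw [lintegral_add_right _ measurable_const, lintegral_one]
      exact ENNReal.add_ne_top.mpr ⟨hθ.2.ne, measure_ne_top _ _⟩
    have h2 : (∫⁻ ω, η.discTotal r ω ∂P) ≠ ⊤ := by
      refine ne_top_of_le_ne_top ?_ (lintegral_mono fun ω => hsq _)
      rw [lintegral_add_right _ measurable_const, lintegral_one]
      exact ENNReal.add_ne_top.mpr ⟨hη.2.ne, measure_ne_top _ _⟩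
    exact ENNReal.mul_ne_top ENNReal.ofReal_ne_top (ENNReal.add_ne_top.mpr ⟨h1, h2⟩)
  -- a.e. convergence of the difference quotients of the running cost
  have hA : ∀ᵐ ω ∂P, Tendsto (fun l : ℝ =>
      (runCost c X x r (SingularControl.comb θ η l) ω - runCost c X x r θ ω) / l)
      (nhdsWithin 0 (Set.Ioi 0))
      (nhds (∫ t in Set.Ici (0:ℝ), c' t (x + X t ω) (θ.toFun ω t)
        * (η.toFun ω t - θ.toFun ω t) * Real.exp (-r * t))) := by
    filter_upwards [hJθ.1, hDθae, hDηae] with ω h1 h4 h5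
    obtain ⟨hbtI, -⟩ := hbtint ω h4 h5
    have hXp : Measurable fun t : ℝ => X t ω :=
      hXmeas.comp (measurable_id.prodMk measurable_const)
    have hθp : Measurable (θ.toFun ω) := (θ.mono ω).measurable
    have hηp : Measurable (η.toFun ω) := (η.mono ω).measurable
    have hc0 : Measurable fun t => c t (x + X t ω) (θ.toFun ω t) :=
      hcmeas.comp (measurable_id.prodMk ((measurable_const.add hXp).prodMk hθp))
    have hinner : Tendsto (fun l : ℝ => ∫ t in Set.Ici (0:ℝ),
        (c t (x + X t ω) (θ.toFun ω t + l * (η.toFun ω t - θ.toFun ω t))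
          - c t (x + X t ω) (θ.toFun ω t)) * Real.exp (-r * t) / l)
        (nhdsWithin 0 (Set.Ioi 0))
        (nhds (∫ t in Set.Ici (0:ℝ), c' t (x + X t ω) (θ.toFun ω t)
          * (η.toFun ω t - θ.toFun ω t) * Real.exp (-r * t))) := by
      refine tendsto_integral_filter_of_dominated_convergence
        (fun t => M * ((θ.toFun ω t + η.toFun ω t) * Real.exp (-r * t)))
        ?_ ?_ (hbtI.const_mul M) ?_
      · refine Eventually.of_forall fun l => ?_
        have hc1 : Measurable fun t => c t (x + X t ω)
            (θ.toFun ω t + l * (η.toFun ω t - θ.toFun ω t)) :=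
          hcmeas.comp (measurable_id.prodMk ((measurable_const.add hXp).prodMk
            (hθp.add ((hηp.sub hθp).const_mul l))))
        exact (((hc1.sub hc0).mul hexpm).div_const l).aestronglyMeasurable
      · filter_upwards [self_mem_nhdsWithin] with l hl
        refine ae_of_all _ fun t => ?_
        have hlpos : (0:ℝ) < l := hl
        rw [Real.norm_eq_abs, abs_div, abs_of_pos hlpos, div_le_iff₀ hlpos]
        calc |(c t (x + X t ω) (θ.toFun ω t + l * (η.toFun ω t - θ.toFun ω t))
            - c t (x + X t ω) (θ.toFun ω t)) * Real.exp (-r * t)|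
            ≤ l * (M * ((θ.toFun ω t + η.toFun ω t) * Real.exp (-r * t))) :=
              hΔbd ω l hlpos.le t
          _ = M * ((θ.toFun ω t + η.toFun ω t) * Real.exp (-r * t)) * l := by ring
      · refine ae_of_all _ fun t => ?_
        have hd : HasDerivAt (fun u : ℝ => c t (x + X t ω)
            (θ.toFun ω t + u * (η.toFun ω t - θ.toFun ω t)))
            (c' t (x + X t ω) (θ.toFun ω t) * (η.toFun ω t - θ.toFun ω t)) 0 := by
          have h := hderivcomp t (x + X t ω) (θ.toFun ω t) (η.toFun ω t - θ.toFun ω t) 0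
          simpa using h
        rw [hasDerivAt_iff_tendsto_slope] at hd
        have hmono : nhdsWithin (0:ℝ) (Set.Ioi 0) ≤ nhdsWithin (0:ℝ) {(0:ℝ)}ᶜ :=
          nhdsWithin_mono 0 (fun y hy => ne_of_gt hy)
        have h2 := (hd.mono_left hmono).mul_const (Real.exp (-r * t))
        refine Tendsto.congr' ?_ h2
        filter_upwards [self_mem_nhdsWithin] with l hl
        have hl0 : l ≠ 0 := ne_of_gt (show (0:ℝ) < l from hl)
        rw [slope_def_field]
        simp only [zero_mul, add_zero, sub_zero]
        field_simp
    refine Tendsto.congr' ?_ hinner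
    filter_upwards [Ioo_mem_nhdsGT_of_mem H01] with l hl
    obtain ⟨hΔint, hdiff⟩ := hΔ ω h1 hbtI l hl
    rw [integral_div, hdiff]
  -- measurability of the difference quotients
  have hQmeas : ∀ l : ℝ, AEStronglyMeasurable (fun ω =>
      (runCost c X x r (SingularControl.comb θ η l) ω - runCost c X x r θ ω) / l) P :=
    fun l => (((hRmeas _ (hcombj l)).measurable.sub
      (hRmeas θ hθj).measurable).div_const l).aestronglyMeasurable
  -- convergence of the expected difference quotients of the running cost
  have hmain : Tendsto (fun l : ℝ => ∫ ω,
      (runCost c X x r (SingularControl.comb θ η l) ω - runCost c X x r θ ω) / l ∂P)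
      (nhdsWithin 0 (Set.Ioi 0))
      (nhds (∫ ω, (∫ t in Set.Ici (0:ℝ), c' t (x + X t ω) (θ.toFun ω t)
        * (η.toFun ω t - θ.toFun ω t) * Real.exp (-r * t)) ∂P)) := by
    refine tendsto_integral_filter_of_dominated_convergence
      (fun ω => M * (ENNReal.ofReal r⁻¹ * (θ.discTotal r ω + η.discTotal r ω)).toReal)
      (Eventually.of_forall hQmeas) ?_ hboundint hA
    filter_upwards [Ioo_mem_nhdsGT_of_mem H01] with l hl
    filter_upwards [hAbd l hl] with ω hω
    rw [Real.norm_eq_abs, abs_div, abs_of_pos hl.1, div_le_iff₀ hl.1]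
    calc |runCost c X x r (SingularControl.comb θ η l) ω - runCost c X x r θ ω|
        ≤ l * (M * (ENNReal.ofReal r⁻¹
          * (θ.discTotal r ω + η.discTotal r ω)).toReal) := hω
      _ = M * (ENNReal.ofReal r⁻¹
          * (θ.discTotal r ω + η.discTotal r ω)).toReal * l := by ring
  -- the eventual identity for the difference quotients of J
  have hIdent : ∀ᶠ l in nhdsWithin (0:ℝ) (Set.Ioi 0),
      (Jobj P c k X x r (SingularControl.comb θ η l) - Jobj P c k X x r θ) / l
      = (∫ ω, (runCost c X x r (SingularControl.comb θ η l) ω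
          - runCost c X x r θ ω) / l ∂P)
        + ((∫ ω, ctrlCost k r η ω ∂P) - (∫ ω, ctrlCost k r θ ω ∂P)) := by
    filter_upwards [Ioo_mem_nhdsGT_of_mem H01] with l hl
    have hl0 : (0:ℝ) < l := hl.1
    have hAint : Integrable (fun ω => runCost c X x r (SingularControl.comb θ η l) ω
        - runCost c X x r θ ω) P := by
      refine Integrable.mono' (hboundint.const_mul l)
        ((hRmeas _ (hcombj l)).measurable.sub
          (hRmeas θ hθj).measurable).aestronglyMeasurable ?_
      filter_upwards [hAbd l hl] with ω hω
      simpa only [Real.norm_eq_abs] using hω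
    have hCcomb : ∀ᵐ ω ∂P, ctrlCost k r (SingularControl.comb θ η l) ω
        = (1 - l) * ctrlCost k r θ ω + l * ctrlCost k r η ω := by
      filter_upwards [hFθae, hFηae] with ω h2 h3
      have hm' := SingularControl.comb_sf_measure θ η hl.1.le hl.2.le ω
      show (∫⁻ t in Set.Ici (0:ℝ), ENNReal.ofReal (k t ω * Real.exp (-r * t))
          ∂((SingularControl.comb θ η l).sf ω).measure).toReal = _
      rw [hm', Measure.restrict_add, Measure.restrict_smul, Measure.restrict_smul,
        lintegral_add_measure, lintegral_smul_measure, lintegral_smul_measure, smul_eq_mul, smul_eq_mul,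
        ENNReal.toReal_add (ENNReal.mul_ne_top ENNReal.ofReal_ne_top h2.ne)
          (ENNReal.mul_ne_top ENNReal.ofReal_ne_top h3.ne),
        ENNReal.toReal_mul, ENNReal.toReal_mul,
        ENNReal.toReal_ofReal (by linarith [hl.2.le] : (0:ℝ) ≤ 1 - l),
        ENNReal.toReal_ofReal hl.1.le]
      rfl
    have hJint : Integrable (fun ω => runCost c X x r θ ω + ctrlCost k r θ ω) P :=
      hJθ.2.1.add hCθint
    have hJcombeq : Jobj P c k X x r (SingularControl.comb θ η l)
        = Jobj P c k X x r θ
          + (∫ ω, (runCost c X x r (SingularControl.comb θ η l) ω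
            - runCost c X x r θ ω) ∂P)
          + l * ((∫ ω, ctrlCost k r η ω ∂P) - (∫ ω, ctrlCost k r θ ω ∂P)) := by
      have hae : ∀ᵐ ω ∂P, runCost c X x r (SingularControl.comb θ η l) ω
          + ctrlCost k r (SingularControl.comb θ η l) ω
          = (runCost c X x r θ ω + ctrlCost k r θ ω)
            + ((runCost c X x r (SingularControl.comb θ η l) ω - runCost c X x r θ ω)
              + l * (ctrlCost k r η ω - ctrlCost k r θ ω)) := by
        filter_upwards [hCcomb] with ω h
        rw [h]; ring
      have hJ1 : Jobj P c k X x r (SingularControl.comb θ η l)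
          = ∫ ω, ((runCost c X x r θ ω + ctrlCost k r θ ω)
            + ((runCost c X x r (SingularControl.comb θ η l) ω - runCost c X x r θ ω)
              + l * (ctrlCost k r η ω - ctrlCost k r θ ω))) ∂P :=
        integral_congr_ae hae
      have hCdiff : Integrable (fun ω => ctrlCost k r η ω - ctrlCost k r θ ω) P :=
        hCηint.sub hCθint
      have hCdiff' : Integrable
          (fun ω => l * (ctrlCost k r η ω - ctrlCost k r θ ω)) P := hCdiff.const_mul l
      have hsum : Integrable (fun ω =>
          (runCost c X x r (SingularControl.comb θ η l) ω - runCost c X x r θ ω)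
            + l * (ctrlCost k r η ω - ctrlCost k r θ ω)) P := hAint.add hCdiff'
      rw [hJ1, integral_add hJint hsum, integral_add hAint hCdiff', integral_const_mul,
        integral_sub hCηint hCθint]
      have hJθeq : Jobj P c k X x r θ
          = ∫ ω, (runCost c X x r θ ω + ctrlCost k r θ ω) ∂P := rfl
      rw [hJθeq]
      ring
    have hQeq : (∫ ω, (runCost c X x r (SingularControl.comb θ η l) ω
          - runCost c X x r θ ω) / l ∂P)
        = (∫ ω, (runCost c X x r (SingularControl.comb θ η l) ω
          - runCost c X x r θ ω) ∂P) / l := integral_div l _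
    rw [hJcombeq, hQeq]
    field_simp
    ring
  -- conclusion
  rw [add_sub_assoc]
  exact Tendsto.congr' (hIdent.mono fun l h => h.symm)
    (hmain.add_const ((∫ ω, ctrlCost k r η ω ∂P) - (∫ ω, ctrlCost k r θ ω ∂P)))

end
end

section
/- If E[(X̄_1)²] < ∞, then the pathwise Lebesgue–Stieltjes integral of e^{−rt} against the nondecreasing process t ↦ X̄_t is square-integrable: E[(∫_{[0,∞)} e^{−rt} dX̄_t)²] < ∞. -/
open MeasureTheory Set Filter
open scoped ENNReal NNReal

open Topology

noncomputable section

/-- The running supremum `X̄_t = sup_{0 ≤ s ≤ t} X_s` of a process. -/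
def runSup {Ω : Type*} (X : ℝ → Ω → ℝ) (t : ℝ) (ω : Ω) : ℝ :=
  sSup ((fun s => X s ω) '' Set.Icc 0 t)

/-- A countable sequence dense in `[a,b]` from the right, starting with `b`. -/
def clampSeq (a b : ℝ) : ℕ → ℝ
  | 0 => b
  | (k + 1) => max a (min b ((Denumerable.ofNat ℚ k : ℚ) : ℝ))

lemma clampSeq_zero (a b : ℝ) : clampSeq a b 0 = b := rfl

lemma clampSeq_mem {a b : ℝ} (hab : a ≤ b) (i : ℕ) : clampSeq a b i ∈ Icc a b := by
  cases i with
  | zero => exact ⟨hab, le_rfl⟩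
  | succ k =>
    refine ⟨le_max_left _ _, max_le hab (min_le_left _ _)⟩

set_option maxHeartbeats 1000000 in
lemma clampSeq_dense {a b s : ℝ} (hs : s ∈ Ico a b) :
    s ∈ closure (range (clampSeq a b) ∩ Ioi s) := by
  rw [Metric.mem_closure_iff]
  intro ε hε
  set δ : ℝ := min ε (b - s) with hδ
  have hδ0 : 0 < δ := lt_min hε (by linarith [hs.2])
  obtain ⟨q, hq1, hq2⟩ := exists_rat_btwn (show s < s + δ by linarith)
  obtain ⟨k, hk⟩ : ∃ k, Denumerable.ofNat ℚ k = q := ⟨@Encodable.encode ℚ Denumerable.toEncodable q, Denumerable.ofNat_encode q⟩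
  refine ⟨(q : ℝ), ⟨⟨k + 1, ?_⟩, hq1⟩, ?_⟩
  · have hqb : (q : ℝ) < b := lt_of_lt_of_le hq2 (by simp [hδ]; linarith [min_le_right ε (b - s)])
    have hqa : a ≤ (q : ℝ) := le_of_lt (lt_of_le_of_lt hs.1 hq1)
    simp only [clampSeq, hk]
    rw [min_eq_right hqb.le, max_eq_right hqa]
  · rw [Real.dist_eq, abs_lt]
    have hδε : δ ≤ ε := min_le_left _ _
    constructor <;> linarith

/-- A càdlàg function is bounded above on compact intervals. -/
lemma bddAbove_image_Icc {f : ℝ → ℝ}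
    (hrc : ∀ t, ContinuousWithinAt f (Ici t) t)
    (hll : ∀ t, ∃ L, Tendsto f (𝓝[<] t) (𝓝 L)) (a b : ℝ) :
    BddAbove (f '' Icc a b) := by
  have hU : ∀ t : ℝ, ∃ U ∈ 𝓝 t, ∃ C : ℝ, ∀ x ∈ U, f x ≤ C := by
    intro t
    obtain ⟨L, hL⟩ := hll t
    set C : ℝ := max (f t) L + 1 with hC
    have h1 : ∀ᶠ x in 𝓝[≥] t, f x < C :=
      (hrc t).eventually_lt_const (by simp [hC]; nlinarith [le_max_left (f t) L])
    have h2 : ∀ᶠ x in 𝓝[<] t, f x < C :=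
      hL.eventually_lt_const (by simp [hC]; nlinarith [le_max_right (f t) L])
    have h3 : ∀ᶠ x in 𝓝 t, f x < C := by
      rw [← nhdsLT_sup_nhdsGE t]
      exact eventually_sup.2 ⟨h2, h1⟩
    exact ⟨{x | f x < C}, h3, C, fun x hx => le_of_lt hx⟩
  choose U hUmem C hUC using hU
  obtain ⟨F, hF⟩ := isCompact_Icc.elim_nhds_subcover U (fun t _ => hUmem t)
  have : f '' Icc a b ⊆ ⋃ t ∈ F, f '' U t := by
    rintro y ⟨x, hx, rfl⟩
    obtain ⟨t, htF, hxU⟩ := mem_iUnion₂.1 (hF.2 hx)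
    exact mem_iUnion₂.2 ⟨t, htF, ⟨x, hxU, rfl⟩⟩
  refine BddAbove.mono this ?_
  refine (Set.Finite.bddAbove_biUnion F.finite_toSet).2 ?_
  intro t _
  exact ⟨C t, by rintro y ⟨x, hx, rfl⟩; exact hUC t x hx⟩

end
noncomputable section

lemma sSup_image_Icc_eq {f : ℝ → ℝ} {a b : ℝ}
    (hrc : ∀ t, ContinuousWithinAt f (Ici t) t)
    (hbdd : BddAbove (f '' Icc a b)) (hab : a ≤ b) :
    sSup (f '' Icc a b) = ⨆ i, f (clampSeq a b i) := by
  have hne : (f '' Icc a b).Nonempty := ⟨f b, ⟨b, ⟨hab, le_rfl⟩, rfl⟩⟩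
  have hsub : range (fun i => f (clampSeq a b i)) ⊆ f '' Icc a b := by
    rintro y ⟨i, rfl⟩; exact ⟨_, clampSeq_mem hab i, rfl⟩
  have hbdd' : BddAbove (range fun i => f (clampSeq a b i)) := hbdd.mono hsub
  apply le_antisymm
  · refine csSup_le hne ?_
    rintro y ⟨s, hs, rfl⟩
    rcases eq_or_lt_of_le hs.2 with h | h
    · have h0 := le_ciSup hbdd' 0
      rw [clampSeq_zero] at h0
      rw [h]; exact h0
    · have hcl : s ∈ closure (range (clampSeq a b) ∩ Ioi s) := clampSeq_dense ⟨hs.1, h⟩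
      have hne2 : (𝓝[range (clampSeq a b) ∩ Ioi s] s).NeBot :=
        mem_closure_iff_nhdsWithin_neBot.1 hcl
      have htt : Tendsto f (𝓝[range (clampSeq a b) ∩ Ioi s] s) (𝓝 (f s)) :=
        (hrc s).mono (fun x hx => mem_Ici.2 (le_of_lt hx.2))
      refine le_of_tendsto htt ?_
      filter_upwards [self_mem_nhdsWithin] with x hx
      obtain ⟨⟨i, rfl⟩, -⟩ := hx
      exact le_ciSup hbdd' i
  · exact ciSup_le fun i => le_csSup hbdd ⟨_, clampSeq_mem hab i, rfl⟩

end
section FDD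

open ProbabilityTheory

variable {Ω : Type*} [m : MeasurableSpace Ω] {P : Measure Ω} [IsProbabilityMeasure P]
  {X : ℝ → Ω → ℝ} {hXsm : ∀ t, StronglyMeasurable (X t)}

lemma measurable_natural_of_le {s j : ℝ} (hj : j ≤ s) :
    Measurable[(Filtration.natural X hXsm) s] (X j) := by
  refine measurable_iff_comap_le.2 ?_
  exact le_iSup₂ (f := fun k (_ : k ≤ s) => MeasurableSpace.comap (X k) inferInstance) j hj

lemma fdd_sorted
    (hstat : ∀ s t : ℝ, 0 ≤ s → s ≤ t →
      Measure.map (fun ω => X t ω - X s ω) P = Measure.map (X (t - s)) P)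
    (hindep : ∀ s t : ℝ, 0 ≤ s → s ≤ t →
      ProbabilityTheory.Indep (MeasurableSpace.comap (fun ω => X t ω - X s ω) inferInstance)
        ((Filtration.natural X hXsm) s) P) :
    ∀ (k : ℕ) (n : ℝ), 0 ≤ n → ∀ (t : Fin (k+1) → ℝ), (∀ i, 0 ≤ t i) → Monotone t →
    Measure.map (fun ω => fun i => X (n + t i) ω - X n ω) P
      = Measure.map (fun ω => fun i => X (t i) ω) P := by
  intro k
  induction k with
  | zero =>
    intro n hn t ht _
    have e1 : Measure.map (fun ω => X (n + t 0) ω - X n ω) P = Measure.map (X (t 0)) P := by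
      have := hstat n (n + t 0) hn (by linarith [ht 0])
      simpa using this
    have hg : Measurable (fun x : ℝ => fun _ : Fin 1 => x) :=
      measurable_pi_lambda _ fun _ => measurable_id
    have hW : Measurable (fun ω => X (n + t 0) ω - X n ω) :=
      ((hXsm _).measurable).sub ((hXsm n).measurable)
    have l1 : (fun ω => fun i : Fin 1 => X (n + t i) ω - X n ω)
        = (fun x : ℝ => fun _ : Fin 1 => x) ∘ (fun ω => X (n + t 0) ω - X n ω) := by
      funext ω i
      have : i = 0 := Subsingleton.elim i 0
      subst this; rfl
    have l2 : (fun ω => fun i : Fin 1 => X (t i) ω)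
        = (fun x : ℝ => fun _ : Fin 1 => x) ∘ (X (t 0)) := by
      funext ω i
      have : i = 0 := Subsingleton.elim i 0
      subst this; rfl
    rw [l1, l2, ← Measure.map_map hg hW, ← Measure.map_map hg (hXsm (t 0)).measurable, e1]
  | succ k IH =>
    intro n hn t ht hmono
    set t' : Fin (k+1) → ℝ := t ∘ Fin.castSucc with ht'def
    set p : ℝ := t (Fin.castSucc (Fin.last k)) with hpdef
    set q : ℝ := t (Fin.last (k+1)) with hqdef
    have hpq : p ≤ q := hmono (Fin.le_last _)
    have hp0 : 0 ≤ p := ht _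
    set V : Ω → (Fin (k+1) → ℝ) := fun ω => fun i => X (n + t' i) ω - X n ω with hVdef
    set W : Ω → ℝ := fun ω => X (n + q) ω - X (n + p) ω with hWdef
    set V' : Ω → (Fin (k+1) → ℝ) := fun ω => fun i => X (t' i) ω with hV'def
    set W' : Ω → ℝ := fun ω => X q ω - X p ω with hW'def
    have hV : Measurable V :=
      measurable_pi_lambda _ fun i => ((hXsm _).measurable).sub ((hXsm n).measurable)
    have hW : Measurable W := ((hXsm _).measurable).sub ((hXsm _).measurable)
    have hV' : Measurable V' := measurable_pi_lambda _ fun i => (hXsm _).measurable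
    have hW' : Measurable W' := ((hXsm _).measurable).sub ((hXsm _).measurable)
    have ht'le : ∀ i, t' i ≤ p := fun i => hmono (Fin.castSucc_le_castSucc_iff.2 (Fin.le_last i))
    -- independence of V and W
    have hVW : IndepFun V W P := by
      rw [ProbabilityTheory.IndepFun_iff_Indep]
      have hVm : Measurable[(Filtration.natural X hXsm) (n + p)] V := by
        refine @measurable_pi_lambda Ω (Fin (k+1)) (fun _ => ℝ)
          ((Filtration.natural X hXsm) (n + p)) _ V fun i => ?_
        exact Measurable.sub
          (measurable_natural_of_le (show n + t' i ≤ n + p by linarith [ht'le i]))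
          (measurable_natural_of_le (show n ≤ n + p by linarith))
      exact (ProbabilityTheory.indep_of_indep_of_le_right
        (hindep (n + p) (n + q) (by linarith) (by linarith)) hVm.comap_le).symm
    have hVW' : IndepFun V' W' P := by
      rw [ProbabilityTheory.IndepFun_iff_Indep]
      have hVm : Measurable[(Filtration.natural X hXsm) p] V' := by
        refine @measurable_pi_lambda Ω (Fin (k+1)) (fun _ => ℝ)
          ((Filtration.natural X hXsm) p) _ V' fun i => ?_
        exact measurable_natural_of_le (ht'le i)
      exact (ProbabilityTheory.indep_of_indep_of_le_right
        (hindep p q hp0 hpq) hVm.comap_le).symm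
    have hmapV : Measure.map V P = Measure.map V' P :=
      IH n hn t' (fun i => ht _) (fun i j hij => hmono (Fin.castSucc_le_castSucc_iff.2 hij))
    have hmapW : Measure.map W P = Measure.map W' P := by
      rw [hWdef, hW'def, hstat (n + p) (n + q) (by linarith) (by linarith), hstat p q hp0 hpq,
        show n + q - (n + p) = q - p by ring]
    have hpair : Measure.map (fun ω => (V ω, W ω)) P
        = Measure.map (fun ω => (V' ω, W' ω)) P := by
      rw [(ProbabilityTheory.indepFun_iff_map_prod_eq_prod_map_map hV.aemeasurable
            hW.aemeasurable).1 hVW,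
          (ProbabilityTheory.indepFun_iff_map_prod_eq_prod_map_map hV'.aemeasurable
            hW'.aemeasurable).1 hVW', hmapV, hmapW]
    set ψ : (Fin (k+1) → ℝ) × ℝ → (Fin (k+2) → ℝ) :=
      fun y => Fin.snoc y.1 (y.1 (Fin.last k) + y.2) with hψdef
    have hψ : Measurable ψ := by
      refine measurable_pi_lambda _ fun i => ?_
      induction i using Fin.lastCases with
      | last =>
        simp only [hψdef, Fin.snoc_last]
        exact ((measurable_pi_apply _).comp measurable_fst).add measurable_snd
      | cast j =>
        simp only [hψdef, Fin.snoc_castSucc]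
        exact (measurable_pi_apply _).comp measurable_fst
    have l1 : (fun ω => fun i : Fin (k+2) => X (n + t i) ω - X n ω)
        = ψ ∘ (fun ω => (V ω, W ω)) := by
      funext ω i
      induction i using Fin.lastCases with
      | last =>
        simp only [Function.comp_apply, hψdef, Fin.snoc_last, hVdef, hWdef, ht'def,
          Function.comp_apply]
        rw [← hpdef, ← hqdef]
        ring
      | cast j =>
        simp only [Function.comp_apply, hψdef, Fin.snoc_castSucc, hVdef, ht'def,
          Function.comp_apply]
    have l2 : (fun ω => fun i : Fin (k+2) => X (t i) ω)
        = ψ ∘ (fun ω => (V' ω, W' ω)) := by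
      funext ω i
      induction i using Fin.lastCases with
      | last =>
        simp only [Function.comp_apply, hψdef, Fin.snoc_last, hV'def, hW'def, ht'def,
          Function.comp_apply]
        rw [← hpdef, ← hqdef]
        ring
      | cast j =>
        simp only [Function.comp_apply, hψdef, Fin.snoc_castSucc, hV'def, ht'def,
          Function.comp_apply]
    rw [l1, l2, ← Measure.map_map hψ (hV.prodMk hW),
      ← Measure.map_map hψ (hV'.prodMk hW'), hpair]

end FDD
section FDD2

open ProbabilityTheory

variable {Ω : Type*} [m : MeasurableSpace Ω] {P : Measure Ω} [IsProbabilityMeasure P]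
  {X : ℝ → Ω → ℝ} {hXsm : ∀ t, StronglyMeasurable (X t)}

lemma fdd_any
    (hstat : ∀ s t : ℝ, 0 ≤ s → s ≤ t →
      Measure.map (fun ω => X t ω - X s ω) P = Measure.map (X (t - s)) P)
    (hindep : ∀ s t : ℝ, 0 ≤ s → s ≤ t →
      ProbabilityTheory.Indep (MeasurableSpace.comap (fun ω => X t ω - X s ω) inferInstance)
        ((Filtration.natural X hXsm) s) P)
    (m' : ℕ) (n : ℝ) (hn : 0 ≤ n) (t : Fin m' → ℝ) (ht : ∀ i, 0 ≤ t i) :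
    Measure.map (fun ω => fun i => X (n + t i) ω - X n ω) P
      = Measure.map (fun ω => fun i => X (t i) ω) P := by
  cases m' with
  | zero =>
    have : (fun ω => fun i : Fin 0 => X (n + t i) ω - X n ω)
        = (fun ω => fun i : Fin 0 => X (t i) ω) := by
      funext ω i; exact i.elim0
    rw [this]
  | succ k =>
    set σ := Tuple.sort t with hσ
    have h := fdd_sorted (hXsm := hXsm) hstat hindep k n hn (t ∘ σ)
      (fun i => ht _) (Tuple.monotone_sort t)
    set ρ : (Fin (k+1) → ℝ) → (Fin (k+1) → ℝ) := fun y => fun i => y (σ.symm i) with hρ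
    have hρm : Measurable ρ := measurable_pi_lambda _ fun i => measurable_pi_apply _
    have hVs : Measurable (fun ω => fun i : Fin (k+1) => X (n + (t ∘ σ) i) ω - X n ω) :=
      measurable_pi_lambda _ fun i => ((hXsm _).measurable).sub ((hXsm n).measurable)
    have hVs' : Measurable (fun ω => fun i : Fin (k+1) => X ((t ∘ σ) i) ω) :=
      measurable_pi_lambda _ fun i => (hXsm _).measurable
    have l1 : (fun ω => fun i : Fin (k+1) => X (n + t i) ω - X n ω)
        = ρ ∘ (fun ω => fun i => X (n + (t ∘ σ) i) ω - X n ω) := by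
      funext ω i
      simp [hρ, Equiv.apply_symm_apply]
    have l2 : (fun ω => fun i : Fin (k+1) => X (t i) ω)
        = ρ ∘ (fun ω => fun i => X ((t ∘ σ) i) ω) := by
      funext ω i
      simp [hρ, Equiv.apply_symm_apply]
    rw [l1, l2, ← Measure.map_map hρm hVs, ← Measure.map_map hρm hVs', h]

lemma lint_sup_sq_eq
    (hstat : ∀ s t : ℝ, 0 ≤ s → s ≤ t →
      Measure.map (fun ω => X t ω - X s ω) P = Measure.map (X (t - s)) P)
    (hindep : ∀ s t : ℝ, 0 ≤ s → s ≤ t →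
      ProbabilityTheory.Indep (MeasurableSpace.comap (fun ω => X t ω - X s ω) inferInstance)
        ((Filtration.natural X hXsm) s) P)
    (m' : ℕ) (n : ℝ) (hn : 0 ≤ n) (t : Fin m' → ℝ) (ht : ∀ i, 0 ≤ t i) :
    ∫⁻ ω, (⨆ i, ENNReal.ofReal (X (n + t i) ω - X n ω)) ^ 2 ∂P
      = ∫⁻ ω, (⨆ i, ENNReal.ofReal (X (t i) ω)) ^ 2 ∂P := by
  set φ : (Fin m' → ℝ) → ℝ≥0∞ := fun y => (⨆ i, ENNReal.ofReal (y i)) ^ 2 with hφdef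
  have hφ : Measurable φ :=
    (Measurable.iSup fun i => (measurable_pi_apply i).ennreal_ofReal).pow_const 2
  have hV : Measurable (fun ω => fun i : Fin m' => X (n + t i) ω - X n ω) :=
    measurable_pi_lambda _ fun i => ((hXsm _).measurable).sub ((hXsm n).measurable)
  have hV' : Measurable (fun ω => fun i : Fin m' => X (t i) ω) :=
    measurable_pi_lambda _ fun i => (hXsm _).measurable
  have := fdd_any (hXsm := hXsm) hstat hindep m' n hn t ht
  calc ∫⁻ ω, (⨆ i, ENNReal.ofReal (X (n + t i) ω - X n ω)) ^ 2 ∂P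
      = ∫⁻ y, φ y ∂(Measure.map (fun ω => fun i => X (n + t i) ω - X n ω) P) := by
        rw [lintegral_map hφ hV]
    _ = ∫⁻ y, φ y ∂(Measure.map (fun ω => fun i : Fin m' => X (t i) ω) P) := by rw [this]
    _ = ∫⁻ ω, (⨆ i, ENNReal.ofReal (X (t i) ω)) ^ 2 ∂P := by rw [lintegral_map hφ hV']

end FDD2
lemma tsum_sq_le_aux (c g : ℕ → ℝ≥0∞) :
    (∑' n, c n * g n) ^ 2 ≤ 2 * (∑' n, c n) * ∑' n, c n * g n ^ 2 := by
  set x : ℕ → ℝ≥0∞ := fun n => c n * g n with hx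
  have key : ∀ n m, x n * x m ≤ c n * c m * (g n ^ 2 + g m ^ 2) := by
    intro n m
    have hg : g n * g m ≤ g n ^ 2 + g m ^ 2 := by
      rcases le_total (g n) (g m) with h | h
      · calc g n * g m ≤ g m * g m := mul_le_mul_left h _
          _ = g m ^ 2 := (pow_two _).symm
          _ ≤ g n ^ 2 + g m ^ 2 := le_add_self
      · calc g n * g m ≤ g n * g n := mul_le_mul_right h _
          _ = g n ^ 2 := (pow_two _).symm
          _ ≤ g n ^ 2 + g m ^ 2 := le_self_add
    calc x n * x m = c n * c m * (g n * g m) := by rw [hx]; ring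
      _ ≤ c n * c m * (g n ^ 2 + g m ^ 2) := mul_le_mul_right hg _
  calc (∑' n, x n) ^ 2 = ∑' n, x n * ∑' m, x m := by rw [pow_two, ENNReal.tsum_mul_right]
    _ = ∑' n, ∑' m, x n * x m := by
        refine tsum_congr fun n => ?_
        rw [ENNReal.tsum_mul_left]
    _ ≤ ∑' n, ∑' m, c n * c m * (g n ^ 2 + g m ^ 2) :=
        ENNReal.tsum_le_tsum fun n => ENNReal.tsum_le_tsum fun m => key n m
    _ = ∑' n, ((c n * g n ^ 2) * (∑' m, c m) + c n * (∑' m, c m * g m ^ 2)) := by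
        refine tsum_congr fun n => ?_
        have : ∀ m, c n * c m * (g n ^ 2 + g m ^ 2)
            = (c n * g n ^ 2) * c m + c n * (c m * g m ^ 2) := fun m => by ring
        rw [tsum_congr this, ENNReal.tsum_add, ENNReal.tsum_mul_left, ENNReal.tsum_mul_left]
    _ = (∑' n, c n * g n ^ 2) * (∑' m, c m) + (∑' n, c n) * (∑' m, c m * g m ^ 2) := by
        rw [ENNReal.tsum_add, ENNReal.tsum_mul_right, ENNReal.tsum_mul_right]
    _ = 2 * (∑' n, c n) * ∑' n, c n * g n ^ 2 := by ring

lemma ofReal_sq_le (x : ℝ) : ENNReal.ofReal x ^ 2 ≤ ENNReal.ofReal (x ^ 2) := by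
  rcases le_or_gt 0 x with h | h
  · rw [ENNReal.ofReal_pow h]
  · rw [ENNReal.ofReal_of_nonpos h.le]
    simp
section StepD

open ProbabilityTheory

variable {Ω : Type*} [m : MeasurableSpace Ω] {P : Measure Ω} [IsProbabilityMeasure P]
  {X : ℝ → Ω → ℝ} {hXsm : ∀ t, StronglyMeasurable (X t)}

lemma lint_G_sq_le
    (hXrc : ∀ ω t, ContinuousWithinAt (fun s => X s ω) (Ici t) t)
    (hXll : ∀ ω t, ∃ L, Tendsto (fun s => X s ω) (𝓝[<] t) (𝓝 L))
    (hstat : ∀ s t : ℝ, 0 ≤ s → s ≤ t →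
      Measure.map (fun ω => X t ω - X s ω) P = Measure.map (X (t - s)) P)
    (hindep : ∀ s t : ℝ, 0 ≤ s → s ≤ t →
      ProbabilityTheory.Indep (MeasurableSpace.comap (fun ω => X t ω - X s ω) inferInstance)
        ((Filtration.natural X hXsm) s) P)
    (n : ℕ) :
    ∫⁻ ω, (⨆ i : ℕ, ENNReal.ofReal (X (clampSeq (n : ℝ) ((n : ℝ) + 1) i) ω - X (n : ℝ) ω)) ^ 2 ∂P
      ≤ ∫⁻ ω, ENNReal.ofReal ((runSup X 1 ω) ^ 2) ∂P := by
  set cs : ℕ → ℝ := clampSeq (n : ℝ) ((n : ℝ) + 1) with hcs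
  have hcs_mem : ∀ i, cs i ∈ Icc (n : ℝ) ((n : ℝ) + 1) :=
    fun i => clampSeq_mem (by linarith) i
  set h : ℕ → Ω → ℝ≥0∞ :=
    fun k ω => ⨆ i : Fin (k + 1), ENNReal.ofReal (X (cs i) ω - X (n : ℝ) ω) with hhdef
  have hhm : ∀ k, Measurable (h k) := fun k =>
    Measurable.iSup fun i => (((hXsm _).measurable).sub ((hXsm _).measurable)).ennreal_ofReal
  have hmono : Monotone h := by
    intro k l hkl ω
    exact iSup_le fun i => le_iSup_of_le (Fin.castLE (by omega) i) le_rfl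
  have hsupr : ∀ ω, ⨆ k, h k ω
      = ⨆ i : ℕ, ENNReal.ofReal (X (cs i) ω - X (n : ℝ) ω) := by
    intro ω
    apply le_antisymm
    · exact iSup_le fun k => iSup_le fun i => le_iSup_of_le (i : ℕ) le_rfl
    · refine iSup_le fun i => ?_
      exact le_trans (le_iSup_of_le (⟨i, by omega⟩ : Fin (i + 1)) le_rfl)
        (le_iSup (fun k => h k ω) i)
  have hsq : (fun ω => (⨆ i : ℕ, ENNReal.ofReal (X (cs i) ω - X (n : ℝ) ω)) ^ 2)
      = fun ω => ⨆ k, (h k ω) ^ 2 := by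
    funext ω
    rw [← hsupr ω]
    apply le_antisymm
    · rw [pow_two, ENNReal.iSup_mul]
      refine iSup_le fun k => ?_
      rw [ENNReal.mul_iSup]
      refine iSup_le fun l => ?_
      calc h k ω * h l ω ≤ h (max k l) ω * h (max k l) ω :=
            mul_le_mul' (hmono (le_max_left k l) ω) (hmono (le_max_right k l) ω)
        _ = (h (max k l) ω) ^ 2 := (pow_two _).symm
        _ ≤ ⨆ k, (h k ω) ^ 2 := le_iSup (fun k => (h k ω) ^ 2) (max k l)
    · refine iSup_le fun k => ?_
      exact pow_le_pow_left' (le_iSup (fun k => h k ω) k) 2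
  rw [hsq, lintegral_iSup (fun k => (hhm k).pow_const 2)
    (fun k l hkl ω => pow_le_pow_left' (hmono hkl ω) 2)]
  refine iSup_le fun k => ?_
  set tk : Fin (k + 1) → ℝ := fun i => cs i - n with htk
  have htk0 : ∀ i, 0 ≤ tk i := fun i => sub_nonneg.2 (hcs_mem i).1
  have heq : ∫⁻ ω, (h k ω) ^ 2 ∂P
      = ∫⁻ ω, (⨆ i : Fin (k + 1), ENNReal.ofReal (X (tk i) ω)) ^ 2 ∂P := by
    have hfd := lint_sup_sq_eq (hXsm := hXsm) hstat hindep (k + 1) (n : ℝ)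
      (Nat.cast_nonneg n) tk htk0
    have e : (fun ω => (h k ω) ^ 2)
        = fun ω => (⨆ i : Fin (k + 1),
            ENNReal.ofReal (X ((n : ℝ) + tk i) ω - X (n : ℝ) ω)) ^ 2 := by
      funext ω
      congr 1
      refine iSup_congr fun i => ?_
      rw [show (n : ℝ) + tk i = cs i by rw [htk]; ring]
    rw [e]
    exact hfd
  rw [heq]
  refine lintegral_mono fun ω => ?_
  have hb : ∀ i : Fin (k + 1), X (tk i) ω ≤ runSup X 1 ω := by
    intro i
    refine le_csSup (bddAbove_image_Icc (hXrc ω) (hXll ω) 0 1) ?_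
    exact ⟨tk i, ⟨htk0 i, by have := (hcs_mem i).2; rw [htk]; simp; linarith⟩, rfl⟩
  calc (⨆ i : Fin (k + 1), ENNReal.ofReal (X (tk i) ω)) ^ 2
      ≤ (ENNReal.ofReal (runSup X 1 ω)) ^ 2 :=
        pow_le_pow_left' (iSup_le fun i => ENNReal.ofReal_le_ofReal (hb i)) 2
    _ ≤ ENNReal.ofReal ((runSup X 1 ω) ^ 2) := ofReal_sq_le _

end StepD
/-- square integrability of the discounted running supremum.
If `E[(X̄_1)²] < ∞` then `E[(∫_{[0,∞)} e^{-rt} dX̄_t)²] < ∞`, where the pathwise integral is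
taken against the Lebesgue–Stieltjes measure of the (nondecreasing, right-continuous) path
`t ↦ X̄_t`, extended to the left of `0` by its value at `0`. -/
theorem discounted_running_sup_sq_integrable
    {Ω : Type*} [m : MeasurableSpace Ω] (P : Measure Ω) [IsProbabilityMeasure P]
    (X : ℝ → Ω → ℝ)
    (hXmeas : Measurable (Function.uncurry X))
    (hXsm : ∀ t, StronglyMeasurable (X t))
    (hX0 : ∀ᵐ ω ∂P, X 0 ω = 0)
    (hXrc : ∀ ω t, ContinuousWithinAt (fun s => X s ω) (Set.Ici t) t)
    (hXll : ∀ ω t, ∃ L, Tendsto (fun s => X s ω) (nhdsWithin t (Set.Iio t)) (nhds L))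
    (hstat : ∀ s t : ℝ, 0 ≤ s → s ≤ t →
      Measure.map (fun ω => X t ω - X s ω) P = Measure.map (X (t - s)) P)
    (hindep : ∀ s t : ℝ, 0 ≤ s → s ≤ t →
      ProbabilityTheory.Indep (MeasurableSpace.comap (fun ω => X t ω - X s ω) inferInstance)
        ((Filtration.natural X hXsm) s) P)
    (r : ℝ) (hr : 0 < r)
    -- `E[(X̄_1)²] < ∞`
    (hXsq : Integrable (fun ω => (runSup X 1 ω) ^ 2) P)
    -- `S ω` is the Stieltjes function of the path `t ↦ X̄_t(ω)`
    (S : Ω → StieltjesFunction ℝ)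
    (hS : ∀ ω t, S ω t = runSup X (max t 0) ω) :
    (∫⁻ ω, (∫⁻ t in Set.Ici (0:ℝ),
        ENNReal.ofReal (Real.exp (-r * t)) ∂(S ω).measure) ^ 2 ∂P) < ⊤ := by
  classical
  -- notation
  set G : ℕ → Ω → ℝ≥0∞ := fun n ω =>
    ⨆ i : ℕ, ENNReal.ofReal (X (clampSeq (n : ℝ) ((n : ℝ) + 1) i) ω - X (n : ℝ) ω) with hGdef
  set c : ℕ → ℝ≥0∞ := fun n => ENNReal.ofReal (Real.exp (-r * n)) with hcdef
  set C : ℝ≥0∞ := ∑' n : ℕ, c n with hCdef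
  set K : ℝ≥0∞ := ∫⁻ ω, ENNReal.ofReal ((runSup X 1 ω) ^ 2) ∂P with hKdef
  have hK : K < ⊤ := hXsq.lintegral_lt_top
  have hGmeas : ∀ n, Measurable (G n) := fun n =>
    Measurable.iSup fun i => (((hXsm _).measurable).sub ((hXsm _).measurable)).ennreal_ofReal
  have hGK : ∀ n : ℕ, ∫⁻ ω, (G n ω) ^ 2 ∂P ≤ K :=
    fun n => lint_G_sq_le (hXsm := hXsm) hXrc hXll hstat hindep n
  -- geometric series
  have hC : C < ⊤ := by
    have hρ : ENNReal.ofReal (Real.exp (-r)) < 1 := by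
      rw [ENNReal.ofReal_lt_one]
      exact Real.exp_lt_one_iff.2 (by linarith)
    have hcg : ∀ n : ℕ, c n = (ENNReal.ofReal (Real.exp (-r))) ^ n := by
      intro n
      rw [hcdef, ← ENNReal.ofReal_pow (Real.exp_pos _).le, ← Real.exp_nat_mul]
      ring_nf
    rw [hCdef, tsum_congr hcg, ENNReal.tsum_geometric]
    rw [ENNReal.inv_lt_top]
    exact tsub_pos_iff_lt.2 hρ
  -- Step A : pathwise bound on the discounted integral
  have hIA : ∀ ω, (∫⁻ t in Set.Ici (0:ℝ),
      ENNReal.ofReal (Real.exp (-r * t)) ∂(S ω).measure) ≤ ∑' n : ℕ, c n * G n ω := by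
    intro ω
    set μω := (S ω).measure with hμω
    have hbdd := fun a b => bddAbove_image_Icc (hXrc ω) (hXll ω) a b
    -- the measure gives no mass to `Iic 0`
    have hIic : μω (Iic 0) = 0 := by
      have hconst : ∀ t ≤ (0:ℝ), S ω t = S ω 0 := by
        intro t ht
        rw [hS, hS]
        norm_num
        rw [max_eq_right ht]
      have htend : Tendsto (S ω) atBot (𝓝 (S ω 0)) := by
        refine Tendsto.congr' ?_ tendsto_const_nhds
        filter_upwards [eventually_le_atBot (0:ℝ)] with t ht
        exact (hconst t ht).symm
      rw [hμω, StieltjesFunction.measure_Iic (S ω) htend 0, sub_self, ENNReal.ofReal_zero]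
    -- each block
    have hBn : ∀ n : ℕ, μω (Ioc (n : ℝ) ((n : ℝ) + 1)) ≤ G n ω := by
      intro n
      rw [hμω, StieltjesFunction.measure_Ioc]
      have e1 : S ω ((n : ℝ) + 1) = runSup X ((n : ℝ) + 1) ω := by
        rw [hS]; congr 1; exact max_eq_left (by positivity)
      have e2 : S ω (n : ℝ) = runSup X (n : ℝ) ω := by
        rw [hS]; congr 1; exact max_eq_left (Nat.cast_nonneg n)
      rw [e1, e2]
      set f : ℝ → ℝ := fun s => X s ω with hf
      set M : ℝ := sSup (f '' Icc (n : ℝ) ((n : ℝ) + 1)) with hM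
      have hMsup : M = ⨆ i, f (clampSeq (n : ℝ) ((n : ℝ) + 1) i) :=
        sSup_image_Icc_eq (hXrc ω) (hbdd _ _) (by linarith)
      have hA : runSup X ((n : ℝ) + 1) ω = max (runSup X (n : ℝ) ω) M := by
        have hunion : Icc (0:ℝ) ((n : ℝ) + 1) = Icc 0 (n : ℝ) ∪ Icc (n : ℝ) ((n : ℝ) + 1) :=
          (Set.Icc_union_Icc_eq_Icc (Nat.cast_nonneg n) (by linarith)).symm
        rw [runSup, hunion, image_union]
        exact csSup_union (hbdd _ _) ⟨f 0, ⟨0, ⟨le_rfl, Nat.cast_nonneg n⟩, rfl⟩⟩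
          (hbdd _ _) ⟨f (n : ℝ), ⟨(n : ℝ), ⟨le_rfl, by linarith⟩, rfl⟩⟩
      have hXnB : X (n : ℝ) ω ≤ runSup X (n : ℝ) ω :=
        le_csSup (hbdd 0 (n : ℝ)) ⟨(n : ℝ), ⟨Nat.cast_nonneg n, le_rfl⟩, rfl⟩
      have hstep1 : ENNReal.ofReal (runSup X ((n : ℝ) + 1) ω - runSup X (n : ℝ) ω)
          ≤ ENNReal.ofReal (M - X (n : ℝ) ω) := by
        rcases le_total M (runSup X (n : ℝ) ω) with hc1 | hc1
        · rw [hA, max_eq_left hc1, sub_self, ENNReal.ofReal_zero]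
          exact zero_le'
        · rw [hA, max_eq_right hc1]
          exact ENNReal.ofReal_le_ofReal (by linarith)
      have hstep2 : ENNReal.ofReal (M - X (n : ℝ) ω) = G n ω := by
        rw [hMsup, hGdef]
        have hcont : ContinuousAt (fun x : ℝ => ENNReal.ofReal (x - X (n : ℝ) ω))
            (⨆ i, f (clampSeq (n : ℝ) ((n : ℝ) + 1) i)) :=
          (ENNReal.continuous_ofReal.comp (continuous_sub_right _)).continuousAt
        have hmn : Monotone (fun x : ℝ => ENNReal.ofReal (x - X (n : ℝ) ω)) :=
          fun a b hab => ENNReal.ofReal_le_ofReal (by linarith)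
        have hbd : BddAbove (range fun i => f (clampSeq (n : ℝ) ((n : ℝ) + 1) i)) := by
          refine (hbdd (n : ℝ) ((n : ℝ) + 1)).mono ?_
          rintro y ⟨i, rfl⟩
          exact ⟨_, clampSeq_mem (by linarith) i, rfl⟩
        exact hmn.map_ciSup_of_continuousAt hcont hbd
      exact le_trans hstep1 (le_of_eq hstep2)
    -- cover
    have hcover : Ici (0:ℝ) ⊆ Iic 0 ∪ ⋃ n : ℕ, Ioc (n : ℝ) ((n : ℝ) + 1) := by
      intro x hx
      rcases eq_or_lt_of_le (mem_Ici.1 hx : (0:ℝ) ≤ x) with h0 | h0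
      · exact Or.inl (le_of_eq h0.symm)
      · refine Or.inr (mem_iUnion.2 ⟨⌈x⌉₊ - 1, ?_⟩)
        have h1 : x ≤ (⌈x⌉₊ : ℝ) := Nat.le_ceil x
        have h2 : (⌈x⌉₊ : ℝ) < x + 1 := Nat.ceil_lt_add_one h0.le
        have h3 : 1 ≤ ⌈x⌉₊ := Nat.ceil_pos.2 h0
        have h4 : ((⌈x⌉₊ - 1 : ℕ) : ℝ) = (⌈x⌉₊ : ℝ) - 1 := by
          push_cast [h3]
          ring
        constructor
        · rw [h4]; linarith
        · rw [h4]; linarith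
    calc ∫⁻ t in Set.Ici (0:ℝ), ENNReal.ofReal (Real.exp (-r * t)) ∂μω
        ≤ ∫⁻ t in (Iic 0 ∪ ⋃ n : ℕ, Ioc (n : ℝ) ((n : ℝ) + 1)),
            ENNReal.ofReal (Real.exp (-r * t)) ∂μω := lintegral_mono_set hcover
      _ ≤ (∫⁻ t in Iic (0:ℝ), ENNReal.ofReal (Real.exp (-r * t)) ∂μω)
          + ∫⁻ t in (⋃ n : ℕ, Ioc (n : ℝ) ((n : ℝ) + 1)),
            ENNReal.ofReal (Real.exp (-r * t)) ∂μω := lintegral_union_le _ _ _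
      _ ≤ 0 + ∑' n : ℕ, ∫⁻ t in Ioc (n : ℝ) ((n : ℝ) + 1),
            ENNReal.ofReal (Real.exp (-r * t)) ∂μω :=
          add_le_add (le_of_eq (setLIntegral_measure_zero _ _ hIic)) (lintegral_iUnion_le _ _)
      _ = ∑' n : ℕ, ∫⁻ t in Ioc (n : ℝ) ((n : ℝ) + 1),
            ENNReal.ofReal (Real.exp (-r * t)) ∂μω := zero_add _
      _ ≤ ∑' n : ℕ, c n * G n ω := by
          refine ENNReal.tsum_le_tsum fun n => ?_
          have hfb : ∀ t ∈ Ioc (n : ℝ) ((n : ℝ) + 1),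
              ENNReal.ofReal (Real.exp (-r * t)) ≤ c n := by
            intro t ht
            exact ENNReal.ofReal_le_ofReal (Real.exp_le_exp.2 (by nlinarith [ht.1.le]))
          calc ∫⁻ t in Ioc (n : ℝ) ((n : ℝ) + 1), ENNReal.ofReal (Real.exp (-r * t)) ∂μω
              ≤ ∫⁻ _ in Ioc (n : ℝ) ((n : ℝ) + 1), c n ∂μω :=
                setLIntegral_mono' measurableSet_Ioc hfb
            _ = c n * μω (Ioc (n : ℝ) ((n : ℝ) + 1)) := setLIntegral_const _ _
            _ ≤ c n * G n ω := mul_le_mul_right (hBn n) _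
  -- final assembly
  have hmain : ∀ ω, (∫⁻ t in Set.Ici (0:ℝ),
      ENNReal.ofReal (Real.exp (-r * t)) ∂(S ω).measure) ^ 2
      ≤ 2 * C * ∑' n : ℕ, c n * (G n ω) ^ 2 := fun ω =>
    le_trans (pow_le_pow_left' (hIA ω) 2) (tsum_sq_le_aux c fun n => G n ω)
  have h2C : (2 : ℝ≥0∞) * C ≠ ⊤ := ENNReal.mul_ne_top (by simp) hC.ne
  calc ∫⁻ ω, (∫⁻ t in Set.Ici (0:ℝ),
        ENNReal.ofReal (Real.exp (-r * t)) ∂(S ω).measure) ^ 2 ∂P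
      ≤ ∫⁻ ω, 2 * C * ∑' n : ℕ, c n * (G n ω) ^ 2 ∂P := lintegral_mono hmain
    _ = 2 * C * ∫⁻ ω, ∑' n : ℕ, c n * (G n ω) ^ 2 ∂P := lintegral_const_mul' _ _ h2C
    _ = 2 * C * ∑' n : ℕ, ∫⁻ ω, c n * (G n ω) ^ 2 ∂P := by
        rw [lintegral_tsum fun n => (((hGmeas n).pow_const 2).const_mul (c n)).aemeasurable]
    _ ≤ 2 * C * ∑' n : ℕ, c n * K := by
        refine mul_le_mul_right (ENNReal.tsum_le_tsum fun n => ?_) _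
        rw [lintegral_const_mul' _ _ ENNReal.ofReal_ne_top]
        exact mul_le_mul_right (hGK n) _
    _ = 2 * C * (C * K) := by rw [ENNReal.tsum_mul_right]
    _ < ⊤ := ENNReal.mul_lt_top (ENNReal.mul_lt_top (by simp) hC) (ENNReal.mul_lt_top hC hK)
end
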